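/- arXiv:2512.08686 — 7 statements merged into one kernel-verified Lean document; each statement's English description precedes it below -/
import Mathlib

section
/- Let α be a finite type with p elements equipped with a partial order, and let a be the number of covering pairs, i.e. the number of pairs (x, y) with x ⋖ y. Then a ≤ ⌊p²/4⌋. -/
open Finset

section aux
variable {α : Type*} [Fintype α] [PartialOrder α]

/-- Adjacent vertices in the cover graph have disjoint neighbourhoods. -/
lemma cover_nbhd_disjoint [DecidableEq α] [DecidableRel ((· ⋖ ·) : α → α → Prop)]
    {x y : α} (h : x ⋖ y) :
    Disjoint (univ.filter (fun z => x ⋖ z ∨ z ⋖ x))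
      (univ.filter (fun z => y ⋖ z ∨ z ⋖ y)) := by
  rw [Finset.disjoint_left]
  intro z hz hz'
  simp only [mem_filter, mem_univ, true_and] at hz hz'
  rcases hz with h1 | h1 <;> rcases hz' with h2 | h2
  · exact h1.2 h.lt h2.lt
  · exact h.2 h1.lt h2.lt
  · exact absurd (h2.lt.trans h1.lt) (asymm h.lt)
  · exact h2.2 h1.lt h.lt
end aux

/-- A partial order on a finite type with `p` elements has at most `⌊p²/4⌋` covering pairs. -/
theorem nCovers_le (α : Type*) [Fintype α] [PartialOrder α] (p a : ℕ)
    (hp : Fintype.card α = p)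
    (ha : Nat.card {q : α × α // q.1 ⋖ q.2} = a) :
    a ≤ p ^ 2 / 4 := by
  classical
  -- express `a` as the cardinality of a filter
  set S : Finset (α × α) := univ.filter (fun q => q.1 ⋖ q.2) with hS
  have haS : S.card = a := by
    rw [← ha, Nat.card_eq_fintype_card, Fintype.card_subtype]
  set d : α → ℕ := fun x => (univ.filter (fun z => x ⋖ z ∨ z ⋖ x)).card with hd
  set dout : α → ℕ := fun x => (univ.filter (fun z => x ⋖ z)).card with hdout
  set din : α → ℕ := fun x => (univ.filter (fun z => z ⋖ x)).card with hdin
  have hd_split : ∀ x, d x = dout x + din x := by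
    intro x
    have hdisj : Disjoint (univ.filter (fun z => x ⋖ z)) (univ.filter (fun z => z ⋖ x)) := by
      rw [Finset.disjoint_left]
      intro z hz hz'
      simp only [mem_filter, mem_univ, true_and] at hz hz'
      exact absurd (hz.lt.trans hz'.lt) (lt_irrefl x)
    rw [hd, hdout, hdin]
    simp only [filter_or]
    exact card_union_of_disjoint hdisj
  -- degree bound from triangle-freeness
  have hdeg : ∀ q ∈ S, d q.1 + d q.2 ≤ p := by
    rintro ⟨x, y⟩ hq
    simp only [hS, mem_filter, mem_univ, true_and] at hq
    rw [hd]
    rw [← card_union_of_disjoint (cover_nbhd_disjoint hq)]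
    calc _ ≤ (univ : Finset α).card := card_le_card (subset_univ _)
    _ = p := hp
  have e_out : ∀ x, ∀ c : ℕ, ∑ y, (if x ⋖ y then c else 0) = dout x * c := by
    intro x c
    simp only [hdout, card_filter, Finset.sum_mul]
    exact Finset.sum_congr rfl fun y _ => by split <;> simp
  have e_in : ∀ y, ∀ c : ℕ, ∑ x, (if x ⋖ y then c else 0) = din y * c := by
    intro y c
    simp only [hdin, card_filter, Finset.sum_mul]
    exact Finset.sum_congr rfl fun x _ => by split <;> simp
  -- sum of out-degrees = number of covering pairs
  have hsum_out : ∑ x, dout x = a := by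
    calc ∑ x, dout x = ∑ x, ∑ y, if x ⋖ y then 1 else 0 := by
          exact Finset.sum_congr rfl fun x _ => by rw [e_out x 1, mul_one]
    _ = ∑ q : α × α, if q.1 ⋖ q.2 then 1 else 0 :=
          (Fintype.sum_prod_type' fun x y => if x ⋖ y then 1 else 0).symm
    _ = a := by rw [← haS, hS, card_filter]
  have hsum_in : ∑ x, din x = a := by
    calc ∑ y, din y = ∑ y, ∑ x, if x ⋖ y then 1 else 0 := by
          exact Finset.sum_congr rfl fun y _ => by rw [e_in y 1, mul_one]
    _ = ∑ x, ∑ y, if x ⋖ y then 1 else 0 := Finset.sum_comm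
    _ = ∑ q : α × α, if q.1 ⋖ q.2 then 1 else 0 :=
          (Fintype.sum_prod_type' fun x y => if x ⋖ y then 1 else 0).symm
    _ = a := by rw [← haS, hS, card_filter]
  have hsum_d : ∑ x, d x = 2 * a := by
    simp only [hd_split, Finset.sum_add_distrib, hsum_out, hsum_in, two_mul]
  -- ∑ d² = ∑ over covering pairs of (d x + d y)
  have hsq : ∑ q ∈ S, (d q.1 + d q.2) = ∑ x, d x ^ 2 := by
    calc ∑ q ∈ S, (d q.1 + d q.2)
        = ∑ q : α × α, if q.1 ⋖ q.2 then d q.1 + d q.2 else 0 := by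
          rw [hS, Finset.sum_filter]
      _ = ∑ x, ∑ y, if x ⋖ y then d x + d y else 0 :=
          Fintype.sum_prod_type' fun x y => if x ⋖ y then d x + d y else 0
      _ = ∑ x, (∑ y, (if x ⋖ y then d x else 0) + ∑ y, (if x ⋖ y then d y else 0)) := by
          refine Finset.sum_congr rfl fun x _ => ?_
          rw [← Finset.sum_add_distrib]
          exact Finset.sum_congr rfl fun y _ => by split <;> simp
      _ = ∑ x, dout x * d x + ∑ x, ∑ y, (if x ⋖ y then d y else 0) := by
          rw [Finset.sum_add_distrib]
          congr 1
          exact Finset.sum_congr rfl fun x _ => e_out x (d x)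
      _ = ∑ x, dout x * d x + ∑ y, din y * d y := by
          congr 1
          rw [Finset.sum_comm]
          exact Finset.sum_congr rfl fun y _ => e_in y (d y)
      _ = ∑ x, d x ^ 2 := by
          rw [← Finset.sum_add_distrib]
          exact Finset.sum_congr rfl fun x _ => by
            rw [pow_two, hd_split x, add_mul]
  have h1 : ∑ x, d x ^ 2 ≤ p * a := by
    rw [← hsq]
    calc ∑ q ∈ S, (d q.1 + d q.2) ≤ ∑ _q ∈ S, p := Finset.sum_le_sum hdeg
    _ = S.card * p := by rw [Finset.sum_const, smul_eq_mul]
    _ = p * a := by rw [haS, mul_comm]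
  -- Cauchy–Schwarz
  have h2 : (∑ x, d x) ^ 2 ≤ Fintype.card α * ∑ x, d x ^ 2 := by
    have := sq_sum_le_card_mul_sum_sq (s := (univ : Finset α))
      (f := fun x => (d x : ℤ))
    have h' : ((∑ x, d x : ℕ) : ℤ) ^ 2 ≤ (Fintype.card α : ℤ) * ((∑ x, d x ^ 2 : ℕ) : ℤ) := by
      push_cast
      simpa using this
    exact_mod_cast h'
  rw [hsum_d, hp] at h2
  have key : 4 * a * a ≤ p ^ 2 * a := by
    calc 4 * a * a = (2 * a) ^ 2 := by ring
    _ ≤ p * ∑ x, d x ^ 2 := h2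
    _ ≤ p * (p * a) := Nat.mul_le_mul_left _ h1
    _ = p ^ 2 * a := by ring
  rcases Nat.eq_zero_or_pos a with h0 | h0
  · simp [h0]
  · have h4 : 4 * a ≤ p ^ 2 := Nat.le_of_mul_le_mul_right key h0
    omega
end

section
/- Let α be a finite type with p ≥ 1 elements equipped with a partial order, and let a be the number of covering pairs. If a > ⌊(p−1)²/4⌋, then the cover graph of the partial order is connected. -/
/-- The cover graph of a partial order: `x` and `y` are adjacent iff `x ⋖ y` or `y ⋖ x`. -/
def coverGraph (α : Type*) [PartialOrder α] : SimpleGraph α where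
  Adj x y := x ⋖ y ∨ y ⋖ x
  symm := ⟨fun x y h => h.symm⟩
  loopless := ⟨fun x h => by
    rcases h with h | h <;> exact absurd h.lt (lt_irrefl x)⟩

section aux

variable {α : Type*} [PartialOrder α]

lemma coverGraph_adj {x y : α} : (coverGraph α).Adj x y ↔ (x ⋖ y ∨ y ⋖ x) := Iff.rfl

/-- No common neighbor business: covers can't form a triangle. -/
lemma cover_triangle_free {a b c : α} (hab : a ⋖ b)
    (hac : a ⋖ c ∨ c ⋖ a) (hbc : b ⋖ c ∨ c ⋖ b) : False := by
  rcases hac with hac | hca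
  · rcases hbc with hbc | hcb
    · exact hac.2 hab.lt hbc.lt
    · exact hab.2 hac.lt hcb.lt
  · rcases hbc with hbc | hcb
    · exact absurd (hbc.lt.trans (hca.lt.trans hab.lt)) (lt_irrefl b)
    · exact hcb.2 hca.lt hab.lt

variable [Fintype α] [DecidableEq α]

open Finset

noncomputable local instance : DecidableRel (coverGraph α).Adj := Classical.decRel _

noncomputable local instance : ∀ x y : α, Decidable (x ⋖ y) := fun _ _ => Classical.dec _

noncomputable local instance : ∀ u x : α, Decidable ((coverGraph α).Reachable u x) := fun _ _ => Classical.dec _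

lemma coverGraph_nbr_disjoint {v w : α} (hvw : (coverGraph α).Adj v w) :
    Disjoint ((coverGraph α).neighborFinset v) ((coverGraph α).neighborFinset w) := by
  rw [Finset.disjoint_left]
  intro z hz hz'
  rw [SimpleGraph.mem_neighborFinset] at hz hz'
  rcases hvw with h | h
  · exact cover_triangle_free h hz hz'
  · exact cover_triangle_free h hz' hz

/-- Convert a sum over a closed set and neighborhoods to an `ite` double sum. -/
lemma sum_nbr_eq_ite (C : Finset α) (f : α → α → ℕ) :
    (∑ x ∈ C, ∑ w ∈ (coverGraph α).neighborFinset x, f x w)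
      = ∑ x : α, ∑ w : α, if x ∈ C ∧ (coverGraph α).Adj x w then f x w else 0 := by
  have h1 : ∀ x : α, (∑ w ∈ (coverGraph α).neighborFinset x, f x w)
      = ∑ w : α, if (coverGraph α).Adj x w then f x w else 0 := by
    intro x
    rw [SimpleGraph.neighborFinset_eq_filter, Finset.sum_filter]
  calc (∑ x ∈ C, ∑ w ∈ (coverGraph α).neighborFinset x, f x w)
      = ∑ x ∈ C, ∑ w : α, if (coverGraph α).Adj x w then f x w else 0 :=
        Finset.sum_congr rfl fun x _ => h1 x
    _ = ∑ x : α, if x ∈ C then (∑ w : α, if (coverGraph α).Adj x w then f x w else 0) else 0 := by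
        rw [Finset.sum_ite_mem, Finset.univ_inter]
    _ = ∑ x : α, ∑ w : α, if x ∈ C ∧ (coverGraph α).Adj x w then f x w else 0 := by
        refine Finset.sum_congr rfl fun x _ => ?_
        split_ifs with hx
        · refine Finset.sum_congr rfl fun w _ => by simp [hx]
        · simp [hx]

/-- Cauchy–Schwarz for natural numbers. -/
lemma nat_sq_sum_le {s : Finset α} (f : α → ℕ) :
    (∑ i ∈ s, f i) ^ 2 ≤ s.card * ∑ i ∈ s, (f i) ^ 2 := by
  have h := sq_sum_le_card_mul_sum_sq (s := s) (f := fun i => (f i : ℤ))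
  exact_mod_cast h

/-- Key bound: for a closed set `C` in the cover graph,
`2 * (sum of degrees over C) ≤ |C|^2`. -/
lemma two_mul_degree_sum_le (C : Finset α)
    (hC : ∀ x w : α, (coverGraph α).Adj x w → (x ∈ C ↔ w ∈ C)) :
    2 * (∑ x ∈ C, (coverGraph α).degree x) ≤ C.card ^ 2 := by
  set G := coverGraph α with hG
  set S1 := ∑ x ∈ C, G.degree x with hS1
  set S2 := ∑ x ∈ C, (G.degree x) ^ 2 with hS2
  -- neighborhoods of vertices in C stay in C
  have hnbr : ∀ x ∈ C, G.neighborFinset x ⊆ C := by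
    intro x hx z hz
    rw [SimpleGraph.mem_neighborFinset] at hz
    exact (hC x z hz).mp hx
  -- per-edge degree bound
  have hdeg : ∀ x ∈ C, ∀ w ∈ G.neighborFinset x, G.degree x + G.degree w ≤ C.card := by
    intro x hx w hw
    rw [SimpleGraph.mem_neighborFinset] at hw
    have hdisj := coverGraph_nbr_disjoint hw
    have hsub : G.neighborFinset x ∪ G.neighborFinset w ⊆ C := by
      refine Finset.union_subset (hnbr x hx) (hnbr w ((hC x w hw).mp hx))
    calc G.degree x + G.degree w
        = (G.neighborFinset x).card + (G.neighborFinset w).card := rfl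
      _ = (G.neighborFinset x ∪ G.neighborFinset w).card :=
          (Finset.card_union_of_disjoint hdisj).symm
      _ ≤ C.card := Finset.card_le_card hsub
  -- symmetry: ∑_{x∈C} ∑_{w∈N(x)} deg w = S2
  have hsymm : (∑ x ∈ C, ∑ w ∈ G.neighborFinset x, G.degree w) = S2 := by
    rw [sum_nbr_eq_ite]
    rw [Finset.sum_comm]
    have : (∑ w : α, ∑ x : α, if x ∈ C ∧ G.Adj x w then G.degree w else 0)
        = ∑ w : α, ∑ x : α, if w ∈ C ∧ G.Adj w x then G.degree w else 0 := by
      refine Finset.sum_congr rfl fun w _ => Finset.sum_congr rfl fun x _ => ?_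
      have hcond : (x ∈ C ∧ G.Adj x w) ↔ (w ∈ C ∧ G.Adj w x) := by
        constructor
        · rintro ⟨hx, hadj⟩; exact ⟨(hC x w hadj).mp hx, hadj.symm⟩
        · rintro ⟨hw, hadj⟩; exact ⟨(hC w x hadj).mp hw, hadj.symm⟩
      simp [hcond]
    rw [this, ← sum_nbr_eq_ite C (fun w _ => G.degree w)]
    refine Finset.sum_congr rfl fun w _ => ?_
    rw [Finset.sum_const, smul_eq_mul, ← SimpleGraph.card_neighborFinset_eq_degree, sq]
  have eA : (∑ x ∈ C, ∑ w ∈ G.neighborFinset x, G.degree x) = S2 := by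
    refine Finset.sum_congr rfl fun x _ => ?_
    rw [Finset.sum_const, smul_eq_mul, SimpleGraph.card_neighborFinset_eq_degree, sq, mul_comm]
  -- 2 * S2 ≤ C.card * S1
  have h2S2 : 2 * S2 ≤ C.card * S1 := by
    have e1 : (∑ x ∈ C, ∑ w ∈ G.neighborFinset x, (G.degree x + G.degree w)) = 2 * S2 := by
      have := Finset.sum_congr (rfl : C = C)
        (fun x _ => Finset.sum_add_distrib
          (s := G.neighborFinset x) (f := fun _ => G.degree x) (g := fun w => G.degree w))
      rw [this, Finset.sum_add_distrib, eA, hsymm, two_mul]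
    have e2 : (∑ x ∈ C, ∑ w ∈ G.neighborFinset x, (G.degree x + G.degree w))
        ≤ ∑ x ∈ C, ∑ w ∈ G.neighborFinset x, C.card := by
      refine Finset.sum_le_sum fun x hx => Finset.sum_le_sum fun w hw => hdeg x hx w hw
    have e3 : (∑ x ∈ C, ∑ w ∈ G.neighborFinset x, C.card) = C.card * S1 := by
      rw [hS1, Finset.mul_sum]
      refine Finset.sum_congr rfl fun x _ => ?_
      rw [Finset.sum_const, smul_eq_mul, SimpleGraph.card_neighborFinset_eq_degree, mul_comm]
    omega
  -- Cauchy–Schwarz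
  have hcs : S1 ^ 2 ≤ C.card * S2 := nat_sq_sum_le _
  rcases Nat.eq_zero_or_pos S1 with h0 | h0
  · rw [h0]; positivity
  · have : 2 * S1 * S1 ≤ C.card ^ 2 * S1 := by
      calc 2 * S1 * S1 = 2 * S1 ^ 2 := by ring
        _ ≤ 2 * (C.card * S2) := by omega
        _ = C.card * (2 * S2) := by ring
        _ ≤ C.card * (C.card * S1) := Nat.mul_le_mul_left _ h2S2
        _ = C.card ^ 2 * S1 := by ring
    exact Nat.le_of_mul_le_mul_right this h0

/-- If the cover graph is not preconnected, the number of covering pairs is small. -/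
lemma covers_le_of_not_preconnected (hnp : ¬ (coverGraph α).Preconnected) :
    4 * Nat.card {q : α × α // q.1 ⋖ q.2} ≤ (Fintype.card α - 1) ^ 2 + 1 := by
  rw [SimpleGraph.Preconnected] at hnp
  push_neg at hnp
  obtain ⟨u, v, huv⟩ := hnp
  -- the component of u, as a finset
  set C : Finset α := Finset.univ.filter (fun x => (coverGraph α).Reachable u x) with hCdef
  have hC : ∀ x w : α, (coverGraph α).Adj x w → (x ∈ C ↔ w ∈ C) := by
    intro x w hadj
    simp only [hCdef, Finset.mem_filter, Finset.mem_univ, true_and]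
    exact ⟨fun hr => hr.trans hadj.reachable, fun hr => hr.trans hadj.symm.reachable⟩
  have hCc : ∀ x w : α, (coverGraph α).Adj x w → (x ∈ Cᶜ ↔ w ∈ Cᶜ) := by
    intro x w hadj
    simp only [Finset.mem_compl]
    exact not_congr (hC x w hadj)
  have huC : u ∈ C := by
    simp only [hCdef, Finset.mem_filter, Finset.mem_univ, true_and]
    exact SimpleGraph.Reachable.refl u
  have hvC : v ∉ C := by
    simp only [hCdef, Finset.mem_filter, Finset.mem_univ, true_and]
    exact huv
  have hk1 : 1 ≤ C.card := Finset.card_pos.mpr ⟨u, huC⟩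
  have hklt : C.card < Fintype.card α := by
    rw [← Finset.card_univ]
    refine Finset.card_lt_card (Finset.ssubset_univ_iff.mpr fun hh => hvC ?_)
    rw [hh]; exact Finset.mem_univ v
  have hcompl : Cᶜ.card = Fintype.card α - C.card := Finset.card_compl C
  have b1 := two_mul_degree_sum_le C hC
  have b2 := two_mul_degree_sum_le Cᶜ hCc
  rw [hcompl] at b2
  have hsplit : (∑ x ∈ C, (coverGraph α).degree x) + (∑ x ∈ Cᶜ, (coverGraph α).degree x)
      = ∑ x : α, (coverGraph α).degree x :=
    Finset.sum_add_sum_compl C _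
  -- total degree sum equals twice the number of covers
  have hAdeg : (∑ x : α, (coverGraph α).degree x)
      = (Finset.univ.filter (fun q : α × α => (coverGraph α).Adj q.1 q.2)).card := by
    rw [Finset.card_filter, Fintype.sum_prod_type]
    refine Finset.sum_congr rfl fun x _ => ?_
    rw [← SimpleGraph.card_neighborFinset_eq_degree, SimpleGraph.neighborFinset_eq_filter,
      Finset.card_filter]
  set P := Finset.univ.filter (fun q : α × α => q.1 ⋖ q.2) with hPdef
  have hPa : P.card = Nat.card {q : α × α // q.1 ⋖ q.2} := by
    rw [Nat.card_eq_fintype_card, Fintype.card_subtype]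
  have hunion : Finset.univ.filter (fun q : α × α => (coverGraph α).Adj q.1 q.2)
      = P ∪ P.image Prod.swap := by
    ext q
    simp only [hPdef, Finset.mem_filter, Finset.mem_union, Finset.mem_image, Finset.mem_univ,
      true_and]
    constructor
    · rintro (h | h)
      · exact Or.inl h
      · exact Or.inr ⟨q.swap, h, Prod.swap_swap q⟩
    · rintro (h | ⟨r, hr, rfl⟩)
      · exact Or.inl h
      · exact Or.inr hr
  have hdisj : Disjoint P (P.image Prod.swap) := by
    rw [Finset.disjoint_left]
    intro q hq hq'
    simp only [hPdef, Finset.mem_filter, Finset.mem_image, Finset.mem_univ, true_and] at hq hq'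
    obtain ⟨r, hr, rfl⟩ := hq'
    exact absurd (hq.lt.trans hr.lt) (lt_irrefl _)
  have htot : (∑ x : α, (coverGraph α).degree x) = 2 * Nat.card {q : α × α // q.1 ⋖ q.2} := by
    rw [hAdeg, hunion, Finset.card_union_of_disjoint hdisj,
      Finset.card_image_of_injective _ Prod.swap_injective, hPa, two_mul]
  have h4a : 4 * Nat.card {q : α × α // q.1 ⋖ q.2}
      ≤ C.card ^ 2 + (Fintype.card α - C.card) ^ 2 := by
    rw [htot] at hsplit
    omega
  -- abstract everything into plain natural numbers
  obtain ⟨k, hkeq⟩ : ∃ k, C.card = k := ⟨_, rfl⟩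
  rw [hkeq] at h4a hk1 hklt
  obtain ⟨p, hpeq⟩ : ∃ p, Fintype.card α = p := ⟨_, rfl⟩
  rw [hpeq] at h4a hklt ⊢
  obtain ⟨a, haeq⟩ : ∃ a, Nat.card {q : α × α // q.1 ⋖ q.2} = a := ⟨_, rfl⟩
  rw [haeq] at h4a ⊢
  -- now pure arithmetic
  have hkm : p - 1 ≤ k * (p - k) := by
    obtain ⟨k', rfl⟩ : ∃ k', k = k' + 1 := ⟨k - 1, by omega⟩
    obtain ⟨m', hm⟩ : ∃ m', p - (k' + 1) = m' + 1 := ⟨p - k' - 2, by omega⟩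
    rw [hm]
    have he : (k' + 1) * (m' + 1) = k' * m' + (k' + m' + 1) := by ring
    rw [he]
    omega
  have hsq : k ^ 2 + (p - k) ^ 2 + 2 * (k * (p - k)) = p ^ 2 := by
    obtain ⟨m, hm⟩ : ∃ m, p = k + m := ⟨p - k, by omega⟩
    rw [hm]
    have hmk : k + m - k = m := by omega
    rw [hmk]; ring
  have hp2 : (p - 1) ^ 2 + 2 * p = p ^ 2 + 1 := by
    obtain ⟨p', hp'⟩ : ∃ p', p = p' + 1 := ⟨p - 1, by omega⟩
    rw [hp']
    have : p' + 1 - 1 = p' := by omega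
    rw [this]; ring
  obtain ⟨A, hA⟩ : ∃ A, k ^ 2 = A := ⟨_, rfl⟩
  obtain ⟨B, hB⟩ : ∃ B, (p - k) ^ 2 = B := ⟨_, rfl⟩
  obtain ⟨Kc, hKc⟩ : ∃ Kc, k * (p - k) = Kc := ⟨_, rfl⟩
  obtain ⟨T, hT⟩ : ∃ T, (p - 1) ^ 2 = T := ⟨_, rfl⟩
  obtain ⟨P2, hP2⟩ : ∃ P2, p ^ 2 = P2 := ⟨_, rfl⟩
  rw [hA, hB] at h4a
  rw [hKc] at hkm
  rw [hA, hB, hKc, hP2] at hsq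
  rw [hT, hP2] at hp2
  rw [hT]
  omega

end aux

/-- If a partial order on a finite type with `p ≥ 1` elements has
more than `⌊(p-1)²/4⌋` covering pairs, then its cover graph is connected. -/
theorem connected_of_many_covers (α : Type*) [Fintype α] [PartialOrder α] (p a : ℕ)
    (hp : Fintype.card α = p) (hp1 : 1 ≤ p)
    (ha : Nat.card {q : α × α // q.1 ⋖ q.2} = a)
    (h : (p - 1) ^ 2 / 4 < a) :
    (coverGraph α).Connected := by
  classical
  have hne : Nonempty α := Fintype.card_pos_iff.mp (by omega)
  rw [SimpleGraph.connected_iff]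
  refine ⟨?_, hne⟩
  by_contra hnp
  have key := covers_le_of_not_preconnected (α := α) hnp
  rw [ha, hp] at key
  have hmod : (p - 1) ^ 2 % 4 ≤ 1 := by
    rcases Nat.even_or_odd (p - 1) with ⟨r, hr⟩ | ⟨r, hr⟩
    · rw [hr]
      have : (r + r) ^ 2 = 4 * r ^ 2 := by ring
      rw [this]; omega
    · rw [hr]
      have : (2 * r + 1) ^ 2 = 4 * (r ^ 2 + r) + 1 := by ring
      rw [this]; omega
  obtain ⟨T, hT⟩ : ∃ T, (p - 1) ^ 2 = T := ⟨_, rfl⟩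
  rw [hT] at key hmod h
  omega
end

section
/- Let α be a finite type with p elements equipped with a partial order whose number of covering pairs is exactly ⌊p²/4⌋. Then the cover graph of the partial order is isomorphic (as a simple graph) to the complete bipartite graph with parts of sizes ⌊p/2⌋ and ⌈p/2⌉. -/
open SimpleGraph Finset

/-- The vertex bijection underlying the isomorphism between the complete bipartite graph and
`turanGraph p 2`: left part goes to odd numbers, right part to even numbers. -/
def cbEquiv (p : ℕ) : (Fin (p / 2) ⊕ Fin ((p + 1) / 2)) ≃ Fin p where
  toFun := Sum.elim (fun i => ⟨2 * i.val + 1, by have := i.isLt; omega⟩)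
    (fun j => ⟨2 * j.val, by have := j.isLt; omega⟩)
  invFun k := if h : k.val % 2 = 1 then Sum.inl ⟨k.val / 2, by have := k.isLt; omega⟩
    else Sum.inr ⟨k.val / 2, by have := k.isLt; omega⟩
  left_inv x := by
    rcases x with i | j
    · dsimp only [Sum.elim_inl]
      rw [dif_pos (by omega)]
      exact congrArg Sum.inl (Fin.ext (show (2 * i.val + 1) / 2 = i.val by omega))
    · dsimp only [Sum.elim_inr]
      rw [dif_neg (by omega)]
      exact congrArg Sum.inr (Fin.ext (show (2 * j.val) / 2 = j.val by omega))
  right_inv k := by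
    dsimp only
    by_cases h : k.val % 2 = 1
    · rw [dif_pos h]
      exact Fin.ext (show 2 * (k.val / 2) + 1 = k.val by omega)
    · rw [dif_neg h]
      exact Fin.ext (show 2 * (k.val / 2) = k.val by omega)

/-- The complete bipartite graph is isomorphic to `turanGraph p 2`. -/
def cbIso (p : ℕ) :
    completeBipartiteGraph (Fin (p / 2)) (Fin ((p + 1) / 2)) ≃g SimpleGraph.turanGraph p 2 where
  toEquiv := cbEquiv p
  map_rel_iff' := by
    rintro (i | i) (j | j) <;>
      simp only [cbEquiv, Equiv.coe_fn_mk, Sum.elim_inl, Sum.elim_inr, turanGraph,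
        completeBipartiteGraph, Sum.isLeft_inl, Sum.isRight_inl, Sum.isLeft_inr,
        Sum.isRight_inr, ne_eq] <;> constructor <;> intro h <;> simp_all <;> omega

lemma cb_card_edgeFinset (a b : ℕ)
    [Fintype (completeBipartiteGraph (Fin a) (Fin b)).edgeSet] :
    #(completeBipartiteGraph (Fin a) (Fin b)).edgeFinset = a * b := by
  classical
  have hinj : Function.Injective
      (fun q : Fin a × Fin b => s(Sum.inl q.1, (Sum.inr q.2 : Fin a ⊕ Fin b))) := by
    intro q q' hq
    rw [Sym2.eq_iff] at hq
    rcases hq with ⟨h1, h2⟩ | ⟨h1, h2⟩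
    · exact Prod.ext (Sum.inl_injective h1) (Sum.inr_injective h2)
    · exact absurd h1 (by simp)
  have h : (completeBipartiteGraph (Fin a) (Fin b)).edgeFinset
      = (Finset.univ : Finset (Fin a × Fin b)).image
        (fun q => s(Sum.inl q.1, Sum.inr q.2)) := by
    ext e
    induction e with
    | h x y =>
      simp only [SimpleGraph.mem_edgeFinset, SimpleGraph.mem_edgeSet, Finset.mem_image,
        Finset.mem_univ, true_and, Prod.exists]
      rcases x with x | x <;> rcases y with y | y <;>
        simp [completeBipartiteGraph, Sym2.eq_iff]
  rw [h, Finset.card_image_of_injective _ hinj, Finset.card_univ, Fintype.card_prod,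
    Fintype.card_fin, Fintype.card_fin]

lemma half_mul_half (p : ℕ) : p / 2 * ((p + 1) / 2) = p ^ 2 / 4 := by
  rcases Nat.even_or_odd p with ⟨k, rfl⟩ | ⟨k, rfl⟩
  · have h1 : (k + k) / 2 = k := by omega
    have h2 : (k + k + 1) / 2 = k := by omega
    have h3 : (k + k) ^ 2 = 4 * (k * k) := by ring
    rw [h1, h2, h3, Nat.mul_div_cancel_left _ (by norm_num)]
  · have h1 : (2 * k + 1) / 2 = k := by omega
    have h2 : (2 * k + 1 + 1) / 2 = k + 1 := by omega
    have h3 : (2 * k + 1) ^ 2 = 4 * (k * (k + 1)) + 1 := by ring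
    rw [h1, h2, h3]
    omega

lemma coverGraph_cliqueFree (α : Type*) [PartialOrder α] : (coverGraph α).CliqueFree 3 := by
  classical
  intro s hs
  rw [SimpleGraph.is3Clique_iff] at hs
  obtain ⟨a, b, c, hab, hac, hbc, -⟩ := hs
  rcases hab with hab | hab <;> rcases hac with hac | hac <;> rcases hbc with hbc | hbc
  · exact hac.2 hab.lt hbc.lt
  · exact hab.2 hac.lt hbc.lt
  · exact absurd (hab.lt.trans (hbc.lt.trans hac.lt)) (lt_irrefl a)
  · exact hbc.2 hac.lt hab.lt
  · exact hbc.2 hab.lt hac.lt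
  · exact absurd (hac.lt.trans (hbc.lt.trans hab.lt)) (lt_irrefl a)
  · exact hab.2 hbc.lt hac.lt
  · exact hac.2 hbc.lt hab.lt

/-- If a partial order on a finite type with `p` elements has exactly `⌊p²/4⌋` covering pairs,
then its cover graph is isomorphic to the complete bipartite graph with parts of sizes
`⌊p/2⌋` and `⌈p/2⌉`. -/
theorem coverGraph_iso_completeBipartite (α : Type*) [Fintype α] [PartialOrder α] (p : ℕ)
    (hp : Fintype.card α = p)
    (ha : Nat.card {q : α × α // q.1 ⋖ q.2} = p ^ 2 / 4) :
    Nonempty (coverGraph α ≃g completeBipartiteGraph (Fin (p / 2)) (Fin ((p + 1) / 2))) := by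
  classical
  subst hp
  set p := Fintype.card α with hpdef
  -- the number of edges of the cover graph
  have hcover : #(coverGraph α).edgeFinset = p ^ 2 / 4 := by
    have h2 := (coverGraph α).two_mul_card_edgeFinset
    have hfil : (Finset.univ.filter fun (x : α × α) => (coverGraph α).Adj x.1 x.2)
        = (Finset.univ.filter fun x : α × α => x.1 ⋖ x.2)
          ∪ (Finset.univ.filter fun x : α × α => x.2 ⋖ x.1) := by
      ext x
      simp only [Finset.mem_filter, Finset.mem_union, Finset.mem_univ, true_and]
      exact Iff.rfl
    have hdisj : Disjoint (Finset.univ.filter fun x : α × α => x.1 ⋖ x.2)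
        (Finset.univ.filter fun x : α × α => x.2 ⋖ x.1) := by
      rw [Finset.disjoint_filter]
      intro x _ h1 h2
      exact absurd (h1.lt.trans h2.lt) (lt_irrefl _)
    have hswap : #(Finset.univ.filter fun x : α × α => x.2 ⋖ x.1)
        = #(Finset.univ.filter fun x : α × α => x.1 ⋖ x.2) :=
      Finset.card_bij' (fun q _ => q.swap) (fun q _ => q.swap)
        (by simp) (by simp) (by simp) (by simp)
    have hcard : #(Finset.univ.filter fun x : α × α => x.1 ⋖ x.2) = p ^ 2 / 4 := by
      rw [← ha, Nat.card_eq_fintype_card, Fintype.card_subtype]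
    have hfc : (Finset.univ.filter fun (x : α × α) =>
        match x with | (x, y) => (coverGraph α).Adj x y)
        = (Finset.univ.filter fun (x : α × α) => (coverGraph α).Adj x.1 x.2) := by
      ext x
      simp
    rw [hfc, hfil, Finset.card_union_of_disjoint hdisj, hswap, hcard] at h2
    omega
  have hturan : #(SimpleGraph.turanGraph p 2).edgeFinset = p ^ 2 / 4 := by
    rw [← (cbIso p).card_edgeFinset_eq, cb_card_edgeFinset, half_mul_half]
  -- the cover graph is Turán-maximal
  have hmax : (coverGraph α).IsTuranMaximal 2 := by
    refine ⟨coverGraph_cliqueFree α, fun H _ hH => ?_⟩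
    let e : α ≃ Fin p := Fintype.equivFinOfCardEq rfl
    have hcf' : (H.map e.toEmbedding).CliqueFree 3 :=
      hH.comap (SimpleGraph.Iso.map e H).symm.toEmbedding.isContained
    have hle := (SimpleGraph.isTuranMaximal_turanGraph (n := p) (r := 2) (by norm_num)).2
      (G' := H.map e.toEmbedding) hcf'
    rw [hturan] at hle
    rw [hcover, (SimpleGraph.Iso.map e H).card_edgeFinset_eq]
    exact hle
  obtain ⟨f⟩ := (SimpleGraph.isTuranMaximal_iff_nonempty_iso_turanGraph (by norm_num)).1 hmax
  exact ⟨(cbIso p).symm.comp f⟩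
end

section
/- For every p ≥ 1, the number of isomorphism classes of partial orders on Fin p having exactly ⌊p²/4⌋ covering pairs equals p if p is odd and p/2 if p is even; that is, H(p, ⌊p²/4⌋) = p for p odd and H(p, ⌊p²/4⌋) = p/2 for p even. -/
/-- The number of covering pairs (arcs of the Hasse diagram) of a partial order `P`. -/
noncomputable def nCovers {α : Type*} (P : PartialOrder α) : ℕ :=
  letI := P
  Nat.card {q : α × α // q.1 ⋖ q.2}

/-- `P` has no isolated points: every element belongs to some covering pair. -/
def NoIsolated {α : Type*} (P : PartialOrder α) : Prop :=
  letI := P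
  ∀ x : α, ∃ y, x ⋖ y ∨ y ⋖ x

/-- Two partial orders on `Fin p` are equivalent iff they are order-isomorphic. -/
def posetIsoSetoid (p : ℕ) : Setoid (PartialOrder (Fin p)) where
  r P Q := Nonempty (@OrderIso (Fin p) (Fin p) P.toPreorder.toLE Q.toPreorder.toLE)
  iseqv := by
    refine ⟨fun P => ⟨@OrderIso.refl _ P.toPreorder.toLE⟩, ?_, ?_⟩
    · rintro P Q ⟨e⟩
      exact ⟨@OrderIso.symm _ _ P.toPreorder.toLE Q.toPreorder.toLE e⟩
    · rintro P Q R ⟨e⟩ ⟨f⟩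
      exact ⟨@OrderIso.trans _ _ _ P.toPreorder.toLE Q.toPreorder.toLE R.toPreorder.toLE e f⟩

/-- `H p a`: the number of isomorphism classes of partial orders on `Fin p`
with exactly `a` covering pairs. -/
noncomputable def H (p a : ℕ) : ℕ :=
  Nat.card (Quotient ((posetIsoSetoid p).comap
    (Subtype.val : {P : PartialOrder (Fin p) // nCovers P = a} → PartialOrder (Fin p))))

/-- `H0 p a`: the number of isomorphism classes of partial orders on `Fin p`
with exactly `a` covering pairs and no isolated point. -/
noncomputable def H0 (p a : ℕ) : ℕ :=
  Nat.card (Quotient ((posetIsoSetoid p).comap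
    (Subtype.val : {P : PartialOrder (Fin p) // nCovers P = a ∧ NoIsolated P} →
      PartialOrder (Fin p))))


set_option linter.unusedSectionVars false
set_option linter.unusedVariables false
set_option maxHeartbeats 1000000

section Lay
variable {α : Type*}

/-- the partial order induced by a layering function -/
def layPO (f : α → ℕ) : PartialOrder α where
  le x y := x = y ∨ f x < f y
  le_refl x := Or.inl rfl
  le_trans x y z h h' := by
    rcases h with rfl | h
    · exact h'
    · rcases h' with rfl | h'
      · exact Or.inr h
      · exact Or.inr (h.trans h')
  le_antisymm x y h h' := by
    rcases h with rfl | h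
    · rfl
    · rcases h' with rfl | h'
      · rfl
      · exact absurd (h.trans h') (lt_irrefl _)

lemma layPO_le (f : α → ℕ) (x y : α) :
    (layPO f).le x y ↔ x = y ∨ f x < f y := Iff.rfl

lemma layPO_lt (f : α → ℕ) (x y : α) :
    (layPO f).lt x y ↔ f x < f y := by
  letI := layPO f
  show x < y ↔ _
  rw [lt_iff_le_not_ge]
  constructor
  · rintro ⟨rfl | h, h2⟩
    · exact absurd (Or.inl rfl) h2
    · exact h
  · intro h
    refine ⟨Or.inr h, ?_⟩
    rintro (rfl | h')
    · exact absurd h (lt_irrefl _)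
    · exact absurd (h.trans h') (lt_irrefl _)

lemma layPO_covBy (f : α → ℕ) (x y : α) :
    (letI := layPO f; x ⋖ y) ↔ f x < f y ∧ ∀ z, ¬(f x < f z ∧ f z < f y) := by
  letI := layPO f
  constructor
  · rintro ⟨h1, h2⟩
    refine ⟨(layPO_lt f x y).1 h1, fun z hz => h2 ((layPO_lt f x z).2 hz.1) ((layPO_lt f z y).2 hz.2)⟩
  · rintro ⟨h1, h2⟩
    exact ⟨(layPO_lt f x y).2 h1, fun z hz1 hz2 =>
      h2 z ⟨(layPO_lt f x z).1 hz1, (layPO_lt f z y).1 hz2⟩⟩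

lemma layPO_isMin (f : α → ℕ) (x : α) :
    (letI := layPO f; IsMin x) ↔ ∀ y, ¬ f y < f x := by
  letI := layPO f
  constructor
  · intro h y hy
    exact (show y < x from (layPO_lt f y x).2 hy).not_ge (h (show y < x from (layPO_lt f y x).2 hy).le)
  · intro h y hy
    rcases hy with rfl | hy
    · exact le_refl _
    · exact absurd hy (h y)

lemma layPO_isMax (f : α → ℕ) (x : α) :
    (letI := layPO f; IsMax x) ↔ ∀ y, ¬ f x < f y := by
  letI := layPO f
  constructor
  · intro h y hy
    exact (show x < y from (layPO_lt f x y).2 hy).not_ge (h (show x < y from (layPO_lt f x y).2 hy).le)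
  · intro h y hy
    rcases hy with rfl | hy
    · exact le_refl _
    · exact absurd hy (h y)

/-- transfer: a poset whose strict order is given by a layering `f` is isomorphic to `layPO g`
provided fibers of `f` and `g` are equinumerous. -/
lemma layPO_transfer {β : Type*} [Finite α] [Finite β] (P : PartialOrder α) (f : α → ℕ)
    (g : β → ℕ) (hlt : ∀ x y, P.lt x y ↔ f x < f y)
    (hfib : ∀ v, Nat.card {x : α // f x = v} = Nat.card {y : β // g y = v}) :
    Nonempty (@OrderIso α β P.toLE (layPO g).toLE) := by
  have hfe : ∀ v, Nonempty ({x : α // f x = v} ≃ {y : β // g y = v}) := fun v =>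
    Finite.card_eq.1 (hfib v)
  let e : α ≃ β := Equiv.ofFiberEquiv (f := f) (g := g) (fun v => (hfe v).some)
  have he : ∀ x, g (e x) = f x := fun x => Equiv.ofFiberEquiv_map _ x
  refine ⟨⟨e, ?_⟩⟩
  intro x y
  show (layPO g).le (e x) (e y) ↔ P.le x y
  rw [layPO_le]
  have : P.le x y ↔ x = y ∨ P.lt x y := by
    constructor
    · intro h
      rcases eq_or_lt_of_le (a := x) (b := y) h with h' | h'
      · exact Or.inl h'
      · exact Or.inr h'
    · rintro (rfl | h)
      · exact P.le_refl x
      · exact le_of_lt (a := x) (b := y) h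
  rw [this, hlt, e.apply_eq_iff_eq, he, he]

section General
variable {α β : Type*}

/-- number of minimal elements -/
noncomputable def nMin (P : PartialOrder α) : ℕ :=
  letI := P
  Nat.card {x : α // IsMin x}

noncomputable def nMax (P : PartialOrder α) : ℕ :=
  letI := P
  Nat.card {x : α // IsMax x}

lemma nCovers_congr (P : PartialOrder α) (Q : PartialOrder β)
    (e : @OrderIso α β P.toLE Q.toLE) : nCovers P = nCovers Q := by
  letI := P; letI := Q
  exact Nat.card_congr <| Equiv.subtypeEquiv (Equiv.prodCongr e.toEquiv e.toEquiv)
    (fun q => (apply_covBy_apply_iff e).symm)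

lemma nMin_congr (P : PartialOrder α) (Q : PartialOrder β)
    (e : @OrderIso α β P.toLE Q.toLE) : nMin P = nMin Q := by
  letI := P; letI := Q
  exact Nat.card_congr <| Equiv.subtypeEquiv e.toEquiv (fun x => (OrderIso.isMin_apply e).symm)

lemma nMax_congr (P : PartialOrder α) (Q : PartialOrder β)
    (e : @OrderIso α β P.toLE Q.toLE) : nMax P = nMax Q := by
  letI := P; letI := Q
  exact Nat.card_congr <| Equiv.subtypeEquiv e.toEquiv (fun x => (OrderIso.isMax_apply e).symm)

/-- the cover graph (Hasse diagram) of a partial order -/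
def covG (P : PartialOrder α) : SimpleGraph α :=
  letI := P
  { Adj := fun x y => x ⋖ y ∨ y ⋖ x
    symm := ⟨fun x y (h : x ⋖ y ∨ y ⋖ x) => h.symm⟩
    loopless := ⟨fun x (h : x ⋖ x ∨ x ⋖ x) => by rcases h with h | h <;> exact absurd h.1 (lt_irrefl x)⟩ }

lemma covG_adj (P : PartialOrder α) (x y : α) :
    (covG P).Adj x y ↔ (letI := P; x ⋖ y ∨ y ⋖ x) := Iff.rfl

lemma covG_cliqueFree (P : PartialOrder α) : (covG P).CliqueFree 3 := by
  letI := P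
  classical
  intro s hs
  obtain ⟨x, y, z, hxy, hxz, hyz, rfl⟩ := Finset.card_eq_three.1 hs.2
  have h1 : (covG P).Adj x y := hs.1 (by simp) (by simp) hxy
  have h2 : (covG P).Adj x z := hs.1 (by simp) (by simp) hxz
  have h3 : (covG P).Adj y z := hs.1 (by simp) (by simp) hyz
  rcases h1 with h1 | h1 <;> rcases h2 with h2 | h2 <;> rcases h3 with h3 | h3
  · exact h2.2 h1.lt h3.lt
  · exact h1.2 h2.lt h3.lt
  · exact absurd (h1.lt.trans (h3.lt.trans h2.lt)) (lt_irrefl x)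
  · exact h3.2 h2.lt h1.lt
  · exact h3.2 h1.lt h2.lt
  · exact absurd (h2.lt.trans (h3.lt.trans h1.lt)) (lt_irrefl x)
  · exact h1.2 h3.lt h2.lt
  · exact h2.2 h3.lt h1.lt

open Finset in
lemma card_edgeFinset_covG [Fintype α] (P : PartialOrder α)
    [DecidableRel (covG P).Adj] : ((covG P).edgeFinset).card = nCovers P := by
  classical
  letI := P
  have hdeg : ∑ v : α, (covG P).degree v = Fintype.card {q : α × α // (covG P).Adj q.1 q.2} := by
    rw [Fintype.card_congr (Equiv.subtypeProdEquivSigmaSubtype (fun a b => (covG P).Adj a b)),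
      Fintype.card_sigma]
    refine Finset.sum_congr rfl fun v _ => ?_
    rw [← SimpleGraph.card_neighborSet_eq_degree]
    rfl
  have hsplit : Fintype.card {q : α × α // (covG P).Adj q.1 q.2} = 2 * nCovers P := by
    have e1 : {q : α × α // (covG P).Adj q.1 q.2} ≃
        {q : α × α // q.1 ⋖ q.2} ⊕ {q : α × α // q.2 ⋖ q.1} := by
      refine subtypeOrEquiv _ _ ?_
      simp only [Pi.disjoint_iff, Prop.disjoint_iff]
      exact fun q => fun ⟨h1, h2⟩ => lt_asymm h1.lt h2.lt
    have e2 : {q : α × α // q.2 ⋖ q.1} ≃ {q : α × α // q.1 ⋖ q.2} :=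
      ⟨fun q => ⟨q.1.swap, q.2⟩, fun q => ⟨q.1.swap, q.2⟩, fun q => by simp, fun q => by simp⟩
    rw [Fintype.card_congr e1, Fintype.card_sum, Fintype.card_congr e2, nCovers,
      Nat.card_eq_fintype_card]
    omega
  have := SimpleGraph.sum_degrees_eq_twice_card_edges (covG P)
  omega
end General

section SP
/-- layer of `v` in the three-layer structure with `n1` bottom and `n2` middle elements -/
def lay (n1 n2 v : ℕ) : ℕ := if v < n1 then 0 else if v < n1 + n2 then 1 else 2

lemma lay_le_two (n1 n2 v : ℕ) : lay n1 n2 v ≤ 2 := by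
  unfold lay; split_ifs <;> simp <;> omega

lemma lay_eq_zero (n1 n2 v : ℕ) : lay n1 n2 v = 0 ↔ v < n1 := by
  unfold lay; split_ifs <;> simp <;> omega

lemma lay_eq_one (n1 n2 v : ℕ) : lay n1 n2 v = 1 ↔ n1 ≤ v ∧ v < n1 + n2 := by
  unfold lay; split_ifs <;> simp <;> omega

lemma lay_eq_two (n1 n2 v : ℕ) : lay n1 n2 v = 2 ↔ n1 + n2 ≤ v := by
  unfold lay; split_ifs <;> simp <;> omega

/-- the standard three-layer poset on `Fin p` -/
def SP (p n1 n2 : ℕ) : PartialOrder (Fin p) := layPO (fun i => lay n1 n2 i.val)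

/-- counting an interval of values in `Fin p` -/
lemma natCard_val_Ico (p a b : ℕ) (hab : a ≤ b) (hbp : b ≤ p) :
    Nat.card {i : Fin p // a ≤ (i : ℕ) ∧ (i : ℕ) < b} = b - a := by
  have e : {i : Fin p // a ≤ (i : ℕ) ∧ (i : ℕ) < b} ≃ Fin (b - a) := by
    refine ⟨fun x => ⟨x.1.1 - a, by have := x.2; omega⟩,
      fun j => ⟨⟨j.1 + a, by have := j.2; omega⟩, by have := j.2; simp; omega⟩, ?_, ?_⟩
    · intro x
      ext
      have := x.2
      simp
      omega
    · intro j
      ext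
      simp
  rw [Nat.card_congr e, Nat.card_eq_fintype_card, Fintype.card_fin]

lemma natCard_lay_fiber (p n1 n2 : ℕ) (h : n1 + n2 ≤ p) (v : ℕ) :
    Nat.card {i : Fin p // lay n1 n2 (i : ℕ) = v} =
      if v = 0 then n1 else if v = 1 then n2 else if v = 2 then p - (n1 + n2) else 0 := by
  rcases Nat.lt_or_ge v 3 with hv | hv
  · interval_cases v
    · refine (Nat.card_congr (Equiv.subtypeEquivRight (q := fun i : Fin p => 0 ≤ (i:ℕ) ∧ (i:ℕ) < n1)
        (fun i => by rw [lay_eq_zero]; omega))).trans ?_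
      rw [natCard_val_Ico p 0 n1 (by omega) (by omega)]
      simp
    · refine (Nat.card_congr (Equiv.subtypeEquivRight
        (q := fun i : Fin p => n1 ≤ (i:ℕ) ∧ (i:ℕ) < n1 + n2)
        (fun i => by rw [lay_eq_one]))).trans ?_
      rw [natCard_val_Ico p n1 (n1+n2) (by omega) h]
      simp
    · refine (Nat.card_congr (Equiv.subtypeEquivRight
        (q := fun i : Fin p => n1 + n2 ≤ (i:ℕ) ∧ (i:ℕ) < p)
        (fun i => by rw [lay_eq_two]; have := i.2; omega))).trans ?_
      rw [natCard_val_Ico p (n1+n2) p h le_rfl]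
      simp
  · have : IsEmpty {i : Fin p // lay n1 n2 (i : ℕ) = v} := by
      refine ⟨fun x => ?_⟩
      have := lay_le_two n1 n2 (x.1 : ℕ)
      omega
    rw [Nat.card_of_isEmpty]
    split_ifs <;> omega

lemma SP_covBy_two (p n2 : ℕ) (x y : Fin p) :
    @CovBy (Fin p) (SP p 0 n2).toLT x y ↔ (lay 0 n2 (x:ℕ) = 1 ∧ lay 0 n2 (y:ℕ) = 2) := by
  refine (layPO_covBy (fun i : Fin p => lay 0 n2 i.val) x y).trans ?_
  have h0 : ∀ i : Fin p, 1 ≤ lay 0 n2 (i:ℕ) := by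
    intro i
    have := lay_eq_zero 0 n2 (i:ℕ)
    have := lay_le_two 0 n2 (i:ℕ)
    omega
  constructor
  · rintro ⟨h1, _⟩
    have := h0 x; have := h0 y; have := lay_le_two 0 n2 (x:ℕ); have := lay_le_two 0 n2 (y:ℕ)
    omega
  · rintro ⟨h1, h2⟩
    refine ⟨by omega, fun z hz => ?_⟩
    have := lay_le_two 0 n2 (z:ℕ)
    omega

lemma SP_covBy_three (p n1 n2 : ℕ) (h1 : 1 ≤ n1) (h2 : 1 ≤ n2) (h3 : n1 + n2 < p) (x y : Fin p) :
    @CovBy (Fin p) (SP p n1 n2).toLT x y ↔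
      ((lay n1 n2 (x:ℕ) = 0 ∧ lay n1 n2 (y:ℕ) = 1) ∨
       (lay n1 n2 (x:ℕ) = 1 ∧ lay n1 n2 (y:ℕ) = 2)) := by
  refine (layPO_covBy (fun i : Fin p => lay n1 n2 i.val) x y).trans ?_
  constructor
  · rintro ⟨hlt, hmid⟩
    have hx := lay_le_two n1 n2 (x:ℕ); have hy := lay_le_two n1 n2 (y:ℕ)
    by_contra hc
    push_neg at hc
    have hx0 : lay n1 n2 (x:ℕ) = 0 := by omega
    have hy2 : lay n1 n2 (y:ℕ) = 2 := by omega
    have hmid1 : lay n1 n2 ((⟨n1, by omega⟩ : Fin p) : ℕ) = 1 :=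
      (lay_eq_one n1 n2 n1).2 (by omega)
    exact hmid ⟨n1, by omega⟩ ⟨by rw [hmid1]; omega, by rw [hmid1]; omega⟩
  · rintro (⟨hx, hy⟩ | ⟨hx, hy⟩) <;>
      exact ⟨by omega, fun z hz => by have := lay_le_two n1 n2 (z:ℕ); omega⟩

lemma nCovers_SP (p n1 n2 : ℕ) (h2 : 1 ≤ n2) (hle : n1 + n2 ≤ p)
    (hv : n1 = 0 ∨ (1 ≤ n1 ∧ n1 + n2 < p)) :
    nCovers (SP p n1 n2) = n2 * (p - n2) := by
  classical
  unfold nCovers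
  rcases hv with rfl | ⟨h1, h3⟩
  · refine (Nat.card_congr ((Equiv.subtypeEquivRight
      (fun q : Fin p × Fin p => SP_covBy_two p n2 q.1 q.2)).trans
      (Equiv.subtypeProdEquivProd (p := fun a : Fin p => lay 0 n2 (a:ℕ) = 1)
        (q := fun b : Fin p => lay 0 n2 (b:ℕ) = 2)))).trans ?_
    rw [Nat.card_prod, natCard_lay_fiber p 0 n2 hle 1, natCard_lay_fiber p 0 n2 hle 2]
    simp
  · have hdisj : Disjoint (fun q : Fin p × Fin p => lay n1 n2 (q.1:ℕ) = 0 ∧ lay n1 n2 (q.2:ℕ) = 1)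
        (fun q : Fin p × Fin p => lay n1 n2 (q.1:ℕ) = 1 ∧ lay n1 n2 (q.2:ℕ) = 2) := by
      simp only [Pi.disjoint_iff, Prop.disjoint_iff]
      rintro q ⟨⟨hq1, -⟩, ⟨hq2, -⟩⟩
      omega
    refine (Nat.card_congr ((Equiv.subtypeEquivRight
      (fun q : Fin p × Fin p => SP_covBy_three p n1 n2 h1 h2 h3 q.1 q.2)).trans
      (subtypeOrEquiv _ _ hdisj))).trans ?_
    rw [Nat.card_sum]
    rw [Nat.card_congr (Equiv.subtypeProdEquivProd (p := fun a : Fin p => lay n1 n2 (a:ℕ) = 0)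
      (q := fun b : Fin p => lay n1 n2 (b:ℕ) = 1))]
    rw [Nat.card_congr (Equiv.subtypeProdEquivProd (p := fun a : Fin p => lay n1 n2 (a:ℕ) = 1)
      (q := fun b : Fin p => lay n1 n2 (b:ℕ) = 2))]
    rw [Nat.card_prod, Nat.card_prod, natCard_lay_fiber p n1 n2 hle 0,
      natCard_lay_fiber p n1 n2 hle 1, natCard_lay_fiber p n1 n2 hle 2]
    simp only [if_true, if_neg (by omega : ¬ (1:ℕ) = 0), if_neg (by omega : ¬ (2:ℕ) = 0),
      if_neg (by omega : ¬ (2:ℕ) = 1)]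
    have hrw : p - n2 = n1 + (p - (n1 + n2)) := by omega
    rw [hrw, Nat.mul_add, Nat.mul_comm n1 n2]

lemma nMin_SP (p n1 n2 : ℕ) (hp : 0 < p) (h2 : 1 ≤ n2) (hle : n1 + n2 ≤ p) :
    nMin (SP p n1 n2) = if n1 = 0 then n2 else n1 := by
  unfold nMin
  rcases Nat.eq_zero_or_pos n1 with rfl | h1
  · have hiff : ∀ x : Fin p, @IsMin (Fin p) (SP p 0 n2).toLE x ↔ lay 0 n2 (x:ℕ) = 1 := by
      intro x
      refine (layPO_isMin (fun i : Fin p => lay 0 n2 i.val) x).trans ?_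
      constructor
      · intro h
        have h0 := lay_le_two 0 n2 (x:ℕ)
        have hx0 : ¬ lay 0 n2 (x:ℕ) = 0 := by rw [lay_eq_zero]; omega
        by_contra hc
        have hw : lay 0 n2 ((⟨0, hp⟩ : Fin p) : ℕ) = 1 := by
          rw [lay_eq_one]; simp only [Fin.val_mk]; omega
        exact h ⟨0, hp⟩ (by rw [hw]; omega)
      · intro hx y
        have hy0 : ¬ lay 0 n2 (y:ℕ) = 0 := by rw [lay_eq_zero]; omega
        have := lay_le_two 0 n2 (y:ℕ)
        omega
    refine (Nat.card_congr (Equiv.subtypeEquivRight hiff)).trans ?_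
    rw [natCard_lay_fiber p 0 n2 hle 1]
    simp
  · have hiff : ∀ x : Fin p, @IsMin (Fin p) (SP p n1 n2).toLE x ↔ lay n1 n2 (x:ℕ) = 0 := by
      intro x
      refine (layPO_isMin (fun i : Fin p => lay n1 n2 i.val) x).trans ?_
      constructor
      · intro h
        by_contra hc
        have hw : lay n1 n2 ((⟨0, hp⟩ : Fin p) : ℕ) = 0 := by
          rw [lay_eq_zero]; simp only [Fin.val_mk]; omega
        exact h ⟨0, hp⟩ (by rw [hw]; omega)
      · intro hx y
        omega
    refine (Nat.card_congr (Equiv.subtypeEquivRight hiff)).trans ?_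
    rw [natCard_lay_fiber p n1 n2 hle 0]
    rw [if_pos rfl, if_neg (by omega)]

lemma nMax_SP (p n1 n2 : ℕ) (h3 : n1 + n2 < p) :
    nMax (SP p n1 n2) = p - (n1 + n2) := by
  unfold nMax
  have hiff : ∀ x : Fin p, @IsMax (Fin p) (SP p n1 n2).toLE x ↔ lay n1 n2 (x:ℕ) = 2 := by
    intro x
    refine (layPO_isMax (fun i : Fin p => lay n1 n2 i.val) x).trans ?_
    constructor
    · intro h
      by_contra hc
      have hw : lay n1 n2 ((⟨p - 1, by omega⟩ : Fin p) : ℕ) = 2 := by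
        rw [lay_eq_two]; simp; omega
      have hx := lay_le_two n1 n2 (x:ℕ)
      exact h ⟨p - 1, by omega⟩ (by rw [hw]; omega)
    · intro hx y
      have := lay_le_two n1 n2 (y:ℕ)
      omega
  refine (Nat.card_congr (Equiv.subtypeEquivRight hiff)).trans ?_
  rw [natCard_lay_fiber p n1 n2 (by omega) 2]
  simp
end SP

section Parity
variable (p : ℕ)

lemma natCard_odds : Nat.card {i : Fin p // (i:ℕ) % 2 = 1} = p / 2 := by
  have e : {i : Fin p // (i:ℕ) % 2 = 1} ≃ Fin (p / 2) := by
    refine ⟨fun x => ⟨x.1.1 / 2, by have h1 := x.2; have h2 := x.1.2; omega⟩,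
      fun j => ⟨⟨2 * j.1 + 1, by have := j.2; omega⟩, by simp⟩, ?_, ?_⟩
    · intro x
      ext
      have h1 := x.2
      simp
      omega
    · intro j
      ext
      simp
      omega
  rw [Nat.card_congr e, Nat.card_eq_fintype_card, Fintype.card_fin]

lemma natCard_evens : Nat.card {i : Fin p // (i:ℕ) % 2 = 0} = p - p / 2 := by
  have e : {i : Fin p // (i:ℕ) % 2 = 0} ≃ Fin (p - p / 2) := by
    refine ⟨fun x => ⟨x.1.1 / 2, by have h1 := x.2; have h2 := x.1.2; omega⟩,
      fun j => ⟨⟨2 * j.1, by have := j.2; omega⟩, by simp⟩, ?_, ?_⟩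
    · intro x
      ext
      have h1 := x.2
      simp
      omega
    · intro j
      ext
      simp
  rw [Nat.card_congr e, Nat.card_eq_fintype_card, Fintype.card_fin]

lemma evens_mul_odds : (p - p / 2) * (p / 2) = p ^ 2 / 4 := by
  rcases Nat.even_or_odd p with ⟨k, hk⟩ | ⟨k, hk⟩
  · subst hk
    have h1 : k + k - (k + k) / 2 = k := by omega
    have h2 : (k + k) / 2 = k := by omega
    rw [h1, h2]
    have h3 : (k + k) ^ 2 = 4 * (k * k) := by ring
    rw [h3]
    omega
  · subst hk
    have h1 : 2 * k + 1 - (2 * k + 1) / 2 = k + 1 := by omega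
    have h2 : (2 * k + 1) / 2 = k := by omega
    rw [h1, h2]
    have h3 : (2 * k + 1) ^ 2 = 4 * ((k + 1) * k) + 1 := by ring
    rw [h3]
    generalize (k + 1) * k = m
    omega

/-- the poset on `Fin p` whose cover graph is the Turán graph `SimpleGraph.turanGraph p 2` -/
def QP : PartialOrder (Fin p) := layPO (fun i => (i:ℕ) % 2)

lemma QP_covBy (x y : Fin p) :
    @CovBy (Fin p) (QP p).toLT x y ↔ ((x:ℕ) % 2 = 0 ∧ (y:ℕ) % 2 = 1) := by
  refine (layPO_covBy (fun i : Fin p => (i:ℕ) % 2) x y).trans ?_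
  constructor
  · rintro ⟨h1, -⟩
    omega
  · rintro ⟨h1, h2⟩
    exact ⟨by omega, fun z hz => by omega⟩

lemma covG_QP : covG (QP p) = SimpleGraph.turanGraph p 2 := by
  ext x y
  show (@CovBy (Fin p) (QP p).toLT x y ∨ @CovBy (Fin p) (QP p).toLT y x) ↔ _
  rw [QP_covBy, QP_covBy]
  show _ ↔ (x:ℕ) % 2 ≠ (y:ℕ) % 2
  omega

lemma nCovers_QP : nCovers (QP p) = p ^ 2 / 4 := by
  unfold nCovers
  refine (Nat.card_congr ((Equiv.subtypeEquivRight
    (fun q : Fin p × Fin p => QP_covBy p q.1 q.2)).trans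
    (Equiv.subtypeProdEquivProd (p := fun a : Fin p => (a:ℕ) % 2 = 0)
      (q := fun b : Fin p => (b:ℕ) % 2 = 1)))).trans ?_
  rw [Nat.card_prod, natCard_evens, natCard_odds, evens_mul_odds]

open Finset in
lemma turan_edgeCard [DecidableRel (SimpleGraph.turanGraph p 2).Adj] :
    ((SimpleGraph.turanGraph p 2).edgeFinset).card = p ^ 2 / 4 := by
  classical
  have h1 : ((covG (QP p)).edgeFinset).card = nCovers (QP p) := card_edgeFinset_covG _
  rw [nCovers_QP] at h1
  rw [← h1]
  have he : (SimpleGraph.turanGraph p 2).edgeFinset = (covG (QP p)).edgeFinset := by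
    simp only [SimpleGraph.edgeFinset]
    exact Set.toFinset_congr (by rw [covG_QP])
  rw [he]

/-- A partial order on `Fin p` with `p²/4` covering pairs has cover graph
isomorphic to the Turán graph. -/
lemma exists_iso_turan {p : ℕ} (P : PartialOrder (Fin p)) (h : nCovers P = p ^ 2 / 4) :
    Nonempty (covG P ≃g SimpleGraph.turanGraph p 2) := by
  classical
  have hedge : ((covG P).edgeFinset).card = p ^ 2 / 4 := by
    rw [card_edgeFinset_covG P, h]
  have htm : (covG P).IsTuranMaximal 2 := by
    refine ⟨covG_cliqueFree P, fun H _ hH => ?_⟩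
    calc H.edgeFinset.card ≤ ((SimpleGraph.turanGraph p 2).edgeFinset).card :=
          (SimpleGraph.isTuranMaximal_turanGraph (r := 2) (by norm_num)).2 hH
      _ = (covG P).edgeFinset.card := by rw [turan_edgeCard, hedge]
  have := htm.nonempty_iso_turanGraph
  rwa [Fintype.card_fin] at this
end Parity

section Classify
variable {α : Type*} [Fintype α] [po : PartialOrder α]

lemma exists_covBy_le {x y : α} (h : x < y) : ∃ c, x ⋖ c ∧ c ≤ y := by
  classical
  letI : @DecidableRel α α (· < ·) := Classical.decRel _
  letI : @DecidableRel α α (· ≤ ·) := Classical.decRel _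
  letI := Fintype.toLocallyFiniteOrder (α := α)
  obtain ⟨c, hc1, hc2⟩ := Relation.TransGen.head'_iff.1 (transGen_covBy_of_lt h)
  refine ⟨c, hc1, ?_⟩
  have := Relation.ReflTransGen.mono (p := (· ≤ ·)) (fun _ _ (h : _ ⋖ _) => h.le) _ _ hc2
  rwa [Relation.reflTransGen_eq_self] at this

/-- The two sides of the cover graph cannot both contain a "middle" element. -/
lemma notBothMid (S : α → Prop)
    (hadj : ∀ x y : α, (x ⋖ y ∨ y ⋖ x) ↔ ¬(S x ↔ S y)) :
    ¬((∃ a, S a ∧ (∃ b, b ⋖ a) ∧ (∃ b', a ⋖ b')) ∧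
      (∃ t, ¬S t ∧ (∃ b, b ⋖ t) ∧ (∃ b', t ⋖ b'))) := by
  rintro ⟨⟨a, hSa, ⟨b1, hb1⟩, ⟨b2, hb2⟩⟩, ⟨t, hTt, ⟨a1, ha1⟩, ⟨a2, ha2⟩⟩⟩
  have hSb1 : ¬ S b1 := fun h => (hadj b1 a).1 (Or.inl hb1) (iff_of_true h hSa)
  have hSb2 : ¬ S b2 := fun h => (hadj a b2).1 (Or.inl hb2) (iff_of_true hSa h)
  have hSa1 : S a1 := by
    by_contra h
    exact (hadj a1 t).1 (Or.inl ha1) (iff_of_false h hTt)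
  have hSa2 : S a2 := by
    by_contra h
    exact (hadj t a2).1 (Or.inl ha2) (iff_of_false hTt h)
  have hat : a ⋖ t ∨ t ⋖ a := (hadj a t).2 (fun h => hTt (h.1 hSa))
  rcases hat with hat | hta
  · -- b1 < a < t < a2
    have hba : b1 ⋖ a2 ∨ a2 ⋖ b1 := (hadj b1 a2).2 (fun h => hSb1 (h.2 hSa2))
    rcases hba with hba | hba
    · exact hba.2 hb1.lt (hat.lt.trans ha2.lt)
    · exact absurd (hb1.lt.trans ((hat.lt.trans ha2.lt).trans hba.lt)) (lt_irrefl _)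
  · -- a1 < t < a < b2
    have hba : a1 ⋖ b2 ∨ b2 ⋖ a1 := (hadj a1 b2).2 (fun h => hSb2 (h.1 hSa1))
    rcases hba with hba | hba
    · exact hba.2 ha1.lt (hta.lt.trans hb2.lt)
    · exact absurd (ha1.lt.trans ((hta.lt.trans hb2.lt).trans hba.lt)) (lt_irrefl _)

/-- From a one-directional side, build a three-layer structure function. -/
lemma buildF (S : α → Prop)
    (hadj : ∀ x y : α, (x ⋖ y ∨ y ⋖ x) ↔ ¬(S x ↔ S y))
    (hOneDir : ∀ a, S a → ¬((∃ b, b ⋖ a) ∧ (∃ b', a ⋖ b')))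
    (hTne : ∃ t, ¬ S t) (hSne : ∃ s, S s) :
    ∃ f : α → ℕ, (∀ x, f x ≤ 2) ∧ (∀ x y : α, x < y ↔ f x < f y) ∧ (∃ x, f x = 1) ∧
      ((∀ x, f x ≠ 0) ∨ ((∃ x, f x = 0) ∧ (∃ x, f x = 2))) := by
  classical
  obtain ⟨t0, ht0⟩ := hTne
  have cross : ∀ a b : α, S a → ¬ S b → a ⋖ b ∨ b ⋖ a := by
    intro a b ha hb
    exact (hadj a b).2 (fun h => hb (h.1 ha))
  -- SM: below all of the middle; SPl: above all of the middle
  set SM : α → Prop := fun a => S a ∧ ∀ b, ¬ S b → a ⋖ b with hSM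
  set SPl : α → Prop := fun a => S a ∧ ∀ b, ¬ S b → b ⋖ a with hSPl
  have hsplit : ∀ a, S a → SM a ∨ SPl a := by
    intro a ha
    by_cases hex : ∀ b, ¬ S b → a ⋖ b
    · exact Or.inl ⟨ha, hex⟩
    · push_neg at hex
      obtain ⟨b0, hb0, hnab⟩ := hex
      have hb0a : b0 ⋖ a := (cross a b0 ha hb0).resolve_left hnab
      refine Or.inr ⟨ha, fun b hb => ?_⟩
      rcases cross a b ha hb with h | h
      · exact absurd ⟨⟨b0, hb0a⟩, ⟨b, h⟩⟩ (hOneDir a ha)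
      · exact h
  set f : α → ℕ := fun x => if S x then (if SM x then 0 else 2) else 1 with hf
  have hfS0 : ∀ x, SM x → f x = 0 := fun x hx => by
    simp only [hf]
    rw [if_pos hx.1, if_pos hx]
  have hfS2 : ∀ x, SPl x → ¬ SM x → f x = 2 := fun x hx hx' => by
    simp only [hf]
    rw [if_pos hx.1, if_neg hx']
  have hfT : ∀ x, ¬ S x → f x = 1 := fun x hx => by
    simp only [hf]
    rw [if_neg hx]
  -- basic comparabilities
  have fact1 : ∀ s t : α, SM s → ¬ S t → s < t := fun s t hs ht => (hs.2 t ht).lt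
  have fact2 : ∀ t s : α, ¬ S t → SPl s → t < s := fun t s ht hs => (hs.2 t ht).lt
  have fact3 : ∀ s s' : α, SM s → SPl s' → s < s' :=
    fun s s' hs hs' => (fact1 s t0 hs ht0).trans (fact2 t0 s' ht0 hs')
  have inc1 : ∀ s s' : α, SM s → SM s' → ¬ s < s' := by
    intro s s' hs hs' hlt
    exact (hs.2 t0 ht0).2 hlt (fact1 s' t0 hs' ht0)
  have inc2 : ∀ s s' : α, SPl s → SPl s' → ¬ s < s' := by
    intro s s' hs hs' hlt
    exact (hs'.2 t0 ht0).2 (fact2 t0 s ht0 hs) hlt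
  have inc3 : ∀ t t' : α, ¬ S t → ¬ S t' → ¬ t < t' := by
    intro t t' ht ht' hlt
    obtain ⟨c, hc1, hc2⟩ := exists_covBy_le hlt
    have hSc : S c := by
      by_contra h
      exact (hadj t c).1 (Or.inl hc1) (iff_of_false ht h)
    rcases hsplit c hSc with hc | hc
    · exact absurd ((hc.2 t ht).lt.trans hc1.lt) (lt_irrefl _)
    · exact absurd (lt_of_lt_of_le (fact2 t' c ht' hc) hc2) (lt_irrefl _)
  have hlt : ∀ x y : α, x < y ↔ f x < f y := by
    intro x y
    by_cases hx : S x <;> by_cases hy : S y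
    · rcases hsplit x hx with hx' | hx' <;> rcases hsplit y hy with hy' | hy'
      · rw [hfS0 x hx', hfS0 y hy']
        exact iff_of_false (inc1 x y hx' hy') (by omega)
      · by_cases hySM : SM y
        · rw [hfS0 x hx', hfS0 y hySM]
          exact iff_of_false (inc1 x y hx' hySM) (by omega)
        · rw [hfS0 x hx', hfS2 y hy' hySM]
          exact iff_of_true (fact3 x y hx' hy') (by omega)
      · by_cases hxSM : SM x
        · rw [hfS0 x hxSM, hfS0 y hy']
          exact iff_of_false (inc1 x y hxSM hy') (by omega)
        · rw [hfS2 x hx' hxSM, hfS0 y hy']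
          exact iff_of_false (fun h => absurd ((fact3 y x hy' hx').trans h) (lt_irrefl _))
            (by omega)
      · by_cases hxSM : SM x <;> by_cases hySM : SM y
        · rw [hfS0 x hxSM, hfS0 y hySM]
          exact iff_of_false (inc1 x y hxSM hySM) (by omega)
        · rw [hfS0 x hxSM, hfS2 y hy' hySM]
          exact iff_of_true (fact3 x y hxSM hy') (by omega)
        · rw [hfS2 x hx' hxSM, hfS0 y hySM]
          exact iff_of_false (fun h => absurd ((fact3 y x hySM hx').trans h) (lt_irrefl _))
            (by omega)
        · rw [hfS2 x hx' hxSM, hfS2 y hy' hySM]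
          exact iff_of_false (inc2 x y hx' hy') (by omega)
    · -- x ∈ S, y ∈ T
      rw [hfT y hy]
      rcases hsplit x hx with hx' | hx'
      · rw [hfS0 x hx']
        exact iff_of_true (fact1 x y hx' hy) (by omega)
      · by_cases hxSM : SM x
        · rw [hfS0 x hxSM]
          exact iff_of_true (fact1 x y hxSM hy) (by omega)
        · rw [hfS2 x hx' hxSM]
          exact iff_of_false (fun h => absurd ((fact2 y x hy hx').trans h) (lt_irrefl _))
            (by omega)
    · -- x ∈ T, y ∈ S
      rw [hfT x hx]
      rcases hsplit y hy with hy' | hy'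
      · rw [hfS0 y hy']
        exact iff_of_false (fun h => absurd ((fact1 y x hy' hx).trans h) (lt_irrefl _))
          (by omega)
      · by_cases hySM : SM y
        · rw [hfS0 y hySM]
          exact iff_of_false (fun h => absurd ((fact1 y x hySM hx).trans h) (lt_irrefl _))
            (by omega)
        · rw [hfS2 y hy' hySM]
          exact iff_of_true (fact2 x y hx hy') (by omega)
    · rw [hfT x hx, hfT y hy]
      exact iff_of_false (inc3 x y hx hy) (by omega)
  have hle2 : ∀ x, f x ≤ 2 := by
    intro x
    simp only [hf]
    split_ifs <;> omega
  by_cases hexSM : ∃ x, SM x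
  · by_cases hexSP : ∃ x, S x ∧ ¬ SM x
    · refine ⟨f, hle2, hlt, ⟨t0, hfT t0 ht0⟩, Or.inr ⟨?_, ?_⟩⟩
      · obtain ⟨x, hx⟩ := hexSM
        exact ⟨x, hfS0 x hx⟩
      · obtain ⟨x, hx, hx'⟩ := hexSP
        exact ⟨x, hfS2 x ((hsplit x hx).resolve_left hx') hx'⟩
    · -- no top layer: shift everything up by one
      push_neg at hexSP
      refine ⟨fun x => f x + 1, ?_, ?_, ?_, Or.inl ?_⟩
      · intro x
        show f x + 1 ≤ 2
        by_cases hx : S x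
        · have := hfS0 x (hexSP x hx)
          omega
        · have := hfT x hx
          omega
      · intro x y
        show x < y ↔ f x + 1 < f y + 1
        rw [hlt x y]
        omega
      · obtain ⟨x, hx⟩ := hexSM
        exact ⟨x, show f x + 1 = 1 from by have := hfS0 x hx; omega⟩
      · intro x
        show f x + 1 ≠ 0
        omega
  · refine ⟨f, hle2, hlt, ⟨t0, hfT t0 ht0⟩, Or.inl ?_⟩
    intro x
    by_cases hx : S x
    · rw [hfS2 x ((hsplit x hx).resolve_left (fun h => hexSM ⟨x, h⟩)) (fun h => hexSM ⟨x, h⟩)]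
      omega
    · rw [hfT x hx]
      omega

lemma natCard_three_fibers (f : α → ℕ) (hf : ∀ x, f x ≤ 2) :
    Nat.card {x : α // f x = 0} + Nat.card {x : α // f x = 1} + Nat.card {x : α // f x = 2}
      = Fintype.card α := by
  classical
  have d1 : Disjoint (fun x : α => f x = 0) (fun x => f x = 1 ∨ f x = 2) := by
    simp only [Pi.disjoint_iff, Prop.disjoint_iff]
    rintro x ⟨h0, h12⟩
    omega
  have d2 : Disjoint (fun x : α => f x = 1) (fun x => f x = 2) := by
    simp only [Pi.disjoint_iff, Prop.disjoint_iff]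
    rintro x ⟨h1, h2⟩
    omega
  have e : α ≃ ({x : α // f x = 0} ⊕ ({x : α // f x = 1} ⊕ {x : α // f x = 2})) :=
    ((Equiv.subtypeUnivEquiv (p := fun x : α => f x = 0 ∨ (f x = 1 ∨ f x = 2))
      (fun x => by have := hf x; omega)).symm.trans
      ((subtypeOrEquiv _ _ d1).trans (Equiv.sumCongr (Equiv.refl _) (subtypeOrEquiv _ _ d2))))
  rw [← Nat.card_eq_fintype_card, Nat.card_congr e, Nat.card_sum, Nat.card_sum]
  omega

lemma exists_iso_turan' {p : ℕ} (hcard : Fintype.card α = p)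
    (hcov : nCovers po = p ^ 2 / 4) :
    Nonempty (covG po ≃g SimpleGraph.turanGraph p 2) := by
  classical
  have hedge : ((covG po).edgeFinset).card = p ^ 2 / 4 := by
    rw [card_edgeFinset_covG po, hcov]
  have htm : (covG po).IsTuranMaximal 2 := by
    refine ⟨covG_cliqueFree po, fun H _ hH => ?_⟩
    let e : α ≃ Fin p := Fintype.equivFinOfCardEq hcard
    let H' := H.map e.toEmbedding
    have iso : H ≃g H' := SimpleGraph.Iso.map e H
    have hH' : H'.CliqueFree 3 := SimpleGraph.CliqueFree.comap iso.symm.toEmbedding.isContained hH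
    calc H.edgeFinset.card = H'.edgeFinset.card := iso.card_edgeFinset_eq
      _ ≤ ((SimpleGraph.turanGraph p 2).edgeFinset).card :=
          (SimpleGraph.isTuranMaximal_turanGraph (r := 2) (by norm_num)).2 hH'
      _ = (covG po).edgeFinset.card := by rw [turan_edgeCard p, hedge]
  have := htm.nonempty_iso_turanGraph
  rwa [hcard] at this

lemma finishClassify {p : ℕ} (hcard : Fintype.card α = p)
    (f : α → ℕ) (hf2 : ∀ x, f x ≤ 2) (hflt : ∀ x y : α, x < y ↔ f x < f y)
    (hf1 : ∃ x, f x = 1)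
    (hfval : (∀ x, f x ≠ 0) ∨ ((∃ x, f x = 0) ∧ (∃ x, f x = 2))) :
    ∃ n1 n2 : ℕ, n1 + n2 ≤ p ∧ 1 ≤ n2 ∧ (n1 = 0 ∨ (1 ≤ n1 ∧ n1 + n2 < p)) ∧
      Nonempty (@OrderIso α (Fin p) po.toLE (SP p n1 n2).toLE) := by
  classical
  have hsum : Nat.card {x : α // f x = 0} + Nat.card {x : α // f x = 1}
      + Nat.card {x : α // f x = 2} = p := by
    rw [← hcard]
    exact natCard_three_fibers f hf2
  set n1 := Nat.card {x : α // f x = 0} with hn1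
  set n2 := Nat.card {x : α // f x = 1} with hn2
  set n3 := Nat.card {x : α // f x = 2} with hn3
  have h2pos : 1 ≤ n2 := by
    obtain ⟨x, hx⟩ := hf1
    haveI : Nonempty {x : α // f x = 1} := ⟨⟨x, hx⟩⟩
    rw [hn2]
    exact Nat.card_pos
  have hfib : ∀ v, Nat.card {x : α // f x = v} =
      Nat.card {i : Fin p // lay n1 n2 ((i : Fin p) : ℕ) = v} := by
    intro v
    rw [natCard_lay_fiber p n1 n2 (by omega) v]
    rcases Nat.lt_or_ge v 3 with hv | hv
    · interval_cases v
      · rw [if_pos rfl]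
      · rw [if_neg (by omega : ¬ (1:ℕ) = 0), if_pos rfl]
      · rw [if_neg (by omega : ¬ (2:ℕ) = 0), if_neg (by omega : ¬ (2:ℕ) = 1), if_pos rfl, ← hn3]
        omega
    · have : IsEmpty {x : α // f x = v} := ⟨fun x => by have := hf2 x.1; omega⟩
      rw [Nat.card_of_isEmpty]
      split_ifs <;> omega
  have hiso := layPO_transfer po f (fun i : Fin p => lay n1 n2 (i : ℕ)) hflt hfib
  refine ⟨n1, n2, by omega, h2pos, ?_, hiso⟩
  rcases hfval with h | ⟨⟨x0, hx0⟩, ⟨x2, hx2⟩⟩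
  · left
    haveI : IsEmpty {x : α // f x = 0} := ⟨fun x => h x.1 x.2⟩
    rw [hn1]
    exact Nat.card_of_isEmpty
  · right
    haveI h1ne : Nonempty {x : α // f x = 0} := ⟨⟨x0, hx0⟩⟩
    haveI h3ne : Nonempty {x : α // f x = 2} := ⟨⟨x2, hx2⟩⟩
    have hp1 : 0 < n1 := by rw [hn1]; exact Nat.card_pos
    have hp3 : 0 < n3 := by rw [hn3]; exact Nat.card_pos
    omega

theorem classify {p : ℕ} (hcard : Fintype.card α = p) (hp : 2 ≤ p)
    (hcov : nCovers po = p ^ 2 / 4) :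
    ∃ n1 n2 : ℕ, n1 + n2 ≤ p ∧ 1 ≤ n2 ∧ (n1 = 0 ∨ (1 ≤ n1 ∧ n1 + n2 < p)) ∧
      Nonempty (@OrderIso α (Fin p) po.toLE (SP p n1 n2).toLE) := by
  classical
  obtain ⟨φ⟩ := exists_iso_turan' hcard hcov
  set S : α → Prop := fun x => ((φ x : Fin p) : ℕ) % 2 = 0 with hS
  have hadj : ∀ x y : α, (x ⋖ y ∨ y ⋖ x) ↔ ¬(S x ↔ S y) := by
    intro x y
    have h1 : (covG po).Adj x y ↔ (SimpleGraph.turanGraph p 2).Adj (φ x) (φ y) :=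
      (φ.map_adj_iff).symm
    have h2 : (x ⋖ y ∨ y ⋖ x) ↔ (covG po).Adj x y := Iff.rfl
    rw [h2, h1]
    show ¬ ((φ x : Fin p) : ℕ) % 2 = ((φ y : Fin p) : ℕ) % 2 ↔ _
    simp only [hS]
    omega
  have hne : Nonempty {q : α × α // q.1 ⋖ q.2} := by
    have h4 : 2 ^ 2 ≤ p ^ 2 := Nat.pow_le_pow_left hp 2
    have hnz : nCovers po ≠ 0 := by
      rw [hcov]
      omega
    unfold nCovers at hnz
    exact (Nat.card_ne_zero.1 hnz).1
  obtain ⟨⟨⟨x0, y0⟩, hc0⟩⟩ := hne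
  have hside := (hadj x0 y0).1 (Or.inl hc0)
  have hSne : ∃ s, S s := by
    by_cases h : S x0
    · exact ⟨x0, h⟩
    · exact ⟨y0, by tauto⟩
  have hTne : ∃ t, ¬ S t := by
    by_cases h : S x0
    · exact ⟨y0, by tauto⟩
    · exact ⟨x0, h⟩
  by_cases hMid : ∃ a, S a ∧ (∃ b, b ⋖ a) ∧ (∃ b', a ⋖ b')
  · -- the S side has a middle element, so the other side is one-directional
    have hOne : ∀ a, ¬ S a → ¬((∃ b, b ⋖ a) ∧ (∃ b', a ⋖ b')) := by
      intro t ht hcon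
      exact notBothMid S hadj ⟨hMid, ⟨t, ht, hcon.1, hcon.2⟩⟩
    have hadj' : ∀ x y : α, (x ⋖ y ∨ y ⋖ x) ↔ ¬((¬ S x) ↔ (¬ S y)) := by
      intro x y
      rw [hadj x y]
      tauto
    obtain ⟨f, hf2, hflt, hf1, hfval⟩ := buildF (fun x => ¬ S x) hadj'
      (fun a ha => hOne a ha) (by simpa using hSne) hTne
    exact finishClassify hcard f hf2 hflt hf1 hfval
  · have hOne : ∀ a, S a → ¬((∃ b, b ⋖ a) ∧ (∃ b', a ⋖ b')) := by
      intro a ha hcon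
      exact hMid ⟨a, ha, hcon.1, hcon.2⟩
    obtain ⟨f, hf2, hflt, hf1, hfval⟩ := buildF S hadj hOne hTne hSne
    exact finishClassify hcard f hf2 hflt hf1 hfval
end Classify


section Count

/-- parameters of the extremal posets -/
def goodPar (p n1 n2 : ℕ) : Prop :=
  n1 + n2 ≤ p ∧ 1 ≤ n2 ∧ n2 * (p - n2) = p ^ 2 / 4 ∧ (n1 = 0 ∨ (1 ≤ n1 ∧ n1 + n2 < p))

lemma param_eq {p n2 : ℕ} (h : n2 ≤ p) :
    n2 * (p - n2) = p ^ 2 / 4 ↔ (2 * n2 = p ∨ 2 * n2 = p + 1 ∨ 2 * n2 + 1 = p) := by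
  rcases Nat.even_or_odd p with ⟨k, hk⟩ | ⟨k, hk⟩
  · subst hk
    have hp4 : (k + k) ^ 2 / 4 = k * k := by
      have h4 : (k + k) ^ 2 = 4 * (k * k) := by ring
      rw [h4]
      generalize k * k = m
      omega
    rw [hp4]
    constructor
    · intro he
      have he' : (n2 : ℤ) * ((k : ℤ) + k - n2) = (k : ℤ) * k := by
        have := h
        zify [this] at he
        linarith [he]
      have hz : ((n2 : ℤ) - k) ^ 2 = 0 := by nlinarith
      have hz' : (n2 : ℤ) - k = 0 := by
        exact pow_eq_zero_iff (by norm_num) |>.1 hz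
      omega
    · rintro (h2 | h2 | h2)
      · have hn : n2 = k := by omega
        subst hn
        rw [show n2 + n2 - n2 = n2 from by omega]
      · omega
      · omega
  · subst hk
    have hp4 : (2 * k + 1) ^ 2 / 4 = k * k + k := by
      have h4 : (2 * k + 1) ^ 2 = 4 * (k * k + k) + 1 := by ring
      rw [h4]
      generalize k * k + k = m
      omega
    rw [hp4]
    constructor
    · intro he
      have he' : (n2 : ℤ) * (2 * (k : ℤ) + 1 - n2) = (k : ℤ) * k + k := by
        have := h
        zify [this] at he
        linarith [he]
      have hz : ((n2 : ℤ) - k) * ((n2 : ℤ) - k - 1) = 0 := by nlinarith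
      rcases mul_eq_zero.1 hz with hz' | hz' <;> omega
    · rintro (h2 | h2 | h2)
      · omega
      · have hn : n2 = k + 1 := by omega
        subst hn
        rw [show 2 * k + 1 - (k + 1) = k from by omega]
        ring
      · have hn : n2 = k := by omega
        subst hn
        rw [show 2 * n2 + 1 - n2 = n2 + 1 from by omega]
        ring

lemma goodPar_facts {p n1 n2 : ℕ} (hp : 2 ≤ p) (h : goodPar p n1 n2) :
    n1 + n2 < p := by
  obtain ⟨hle, h2, heq, hv⟩ := h
  have h4 : 2 ^ 2 ≤ p ^ 2 := Nat.pow_le_pow_left hp 2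
  have hpos : 1 ≤ n2 * (p - n2) := by
    rw [heq]
    omega
  rcases hv with rfl | ⟨h1, h3⟩
  · simp only [Nat.zero_add]
    by_contra hc
    push_neg at hc
    have : p - n2 = 0 := by omega
    rw [this, Nat.mul_zero] at hpos
    omega
  · exact h3

lemma goodPar_inj {p n1 n2 m1 m2 : ℕ} (hp : 2 ≤ p) (h : goodPar p n1 n2)
    (h' : goodPar p m1 m2)
    (e : Nonempty (@OrderIso (Fin p) (Fin p) (SP p n1 n2).toLE (SP p m1 m2).toLE)) :
    n1 = m1 ∧ n2 = m2 := by
  obtain ⟨iso⟩ := e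
  have hmin := nMin_congr (SP p n1 n2) (SP p m1 m2) iso
  have hmax := nMax_congr (SP p n1 n2) (SP p m1 m2) iso
  have hlt := goodPar_facts hp h
  have hlt' := goodPar_facts hp h'
  rw [nMin_SP p n1 n2 (by omega) h.2.1 h.1, nMin_SP p m1 m2 (by omega) h'.2.1 h'.1] at hmin
  rw [nMax_SP p n1 n2 hlt, nMax_SP p m1 m2 hlt'] at hmax
  have h2 := h.2.1
  have h2' := h'.2.1
  split_ifs at hmin <;> omega

lemma nCovers_SP_goodPar {p n1 n2 : ℕ} (h : goodPar p n1 n2) :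
    nCovers (SP p n1 n2) = p ^ 2 / 4 := by
  rw [nCovers_SP p n1 n2 h.2.1 h.1 h.2.2.2, h.2.2.1]

lemma H_eq_card_goodPar (p : ℕ) (hp : 2 ≤ p) :
    H p (p ^ 2 / 4) = Nat.card {x : ℕ × ℕ // goodPar p x.1 x.2} := by
  unfold H
  refine (Nat.card_eq_of_bijective (f := fun t : {x : ℕ × ℕ // goodPar p x.1 x.2} =>
    (Quotient.mk ((posetIsoSetoid p).comap Subtype.val)
      (⟨SP p t.1.1 t.1.2, nCovers_SP_goodPar t.2⟩ :
        {P : PartialOrder (Fin p) // nCovers P = p ^ 2 / 4}))) ⟨?_, ?_⟩).symm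
  · intro t t' ht
    have hrel := Quotient.exact ht
    have : Nonempty (@OrderIso (Fin p) (Fin p)
        (SP p t.1.1 t.1.2).toLE (SP p t'.1.1 t'.1.2).toLE) := hrel
    obtain ⟨e1, e2⟩ := goodPar_inj hp t.2 t'.2 this
    exact Subtype.ext (Prod.ext e1 e2)
  · intro q
    induction q using Quotient.ind with
    | _ Ph =>
      obtain ⟨P, hP⟩ := Ph
      obtain ⟨n1, n2, hle, h2, hv, ⟨iso⟩⟩ :=
        classify (α := Fin p) (po := P) (Fintype.card_fin p) hp hP
      have heq : n2 * (p - n2) = p ^ 2 / 4 := by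
        rw [← nCovers_SP p n1 n2 h2 hle hv, ← nCovers_congr P (SP p n1 n2) iso, hP]
      refine ⟨⟨(n1, n2), hle, h2, heq, hv⟩, ?_⟩
      apply Quotient.sound
      exact ⟨(@OrderIso.symm (Fin p) (Fin p) P.toPreorder.toLE
        (SP p n1 n2).toPreorder.toLE iso)⟩

lemma card_goodPar_even (k : ℕ) (hk : 1 ≤ k) :
    Nat.card {x : ℕ × ℕ // goodPar (2 * k) x.1 x.2} = k := by
  classical
  have hiff : ∀ x : ℕ × ℕ, goodPar (2 * k) x.1 x.2 ↔
      x ∈ (Finset.range k) ×ˢ ({k} : Finset ℕ) := by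
    rintro ⟨n1, n2⟩
    simp only [Finset.mem_product, Finset.mem_range, Finset.mem_singleton]
    constructor
    · rintro ⟨hle, h2, heq, hv⟩
      have hn2 : n2 = k := by
        have := (param_eq (p := 2 * k) (n2 := n2) (by omega)).1 heq
        omega
      subst hn2
      refine ⟨?_, rfl⟩
      rcases hv with rfl | ⟨h1, h3⟩ <;> omega
    · rintro ⟨h1, rfl⟩
      refine ⟨by omega, by omega, (param_eq (by omega)).2 (by omega), ?_⟩
      rcases Nat.eq_zero_or_pos n1 with rfl | hn1
      · exact Or.inl rfl
      · exact Or.inr ⟨hn1, by omega⟩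
  rw [Nat.card_congr (Equiv.subtypeEquivRight hiff), Nat.card_eq_fintype_card,
    Fintype.card_coe, Finset.card_product, Finset.card_range, Finset.card_singleton,
    Nat.mul_one]

lemma card_goodPar_odd (k : ℕ) (hk : 1 ≤ k) :
    Nat.card {x : ℕ × ℕ // goodPar (2 * k + 1) x.1 x.2} = 2 * k + 1 := by
  classical
  have hiff : ∀ x : ℕ × ℕ, goodPar (2 * k + 1) x.1 x.2 ↔
      x ∈ ((Finset.range k) ×ˢ ({k + 1} : Finset ℕ)) ∪
          ((Finset.range (k + 1)) ×ˢ ({k} : Finset ℕ)) := by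
    rintro ⟨n1, n2⟩
    simp only [Finset.mem_union, Finset.mem_product, Finset.mem_range, Finset.mem_singleton]
    constructor
    · rintro ⟨hle, h2, heq, hv⟩
      have hn2 : n2 = k ∨ n2 = k + 1 := by
        have := (param_eq (p := 2 * k + 1) (n2 := n2) (by omega)).1 heq
        omega
      rcases hn2 with rfl | rfl
      · refine Or.inr ⟨?_, rfl⟩
        rcases hv with rfl | ⟨h1, h3⟩ <;> omega
      · refine Or.inl ⟨?_, rfl⟩
        rcases hv with rfl | ⟨h1, h3⟩ <;> omega
    · rintro (⟨h1, rfl⟩ | ⟨h1, rfl⟩)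
      · refine ⟨by omega, by omega, (param_eq (by omega)).2 (by omega), ?_⟩
        rcases Nat.eq_zero_or_pos n1 with rfl | hn1
        · exact Or.inl rfl
        · exact Or.inr ⟨hn1, by omega⟩
      · refine ⟨by omega, by omega, (param_eq (by omega)).2 (by omega), ?_⟩
        rcases Nat.eq_zero_or_pos n1 with rfl | hn1
        · exact Or.inl rfl
        · exact Or.inr ⟨hn1, by omega⟩
  rw [Nat.card_congr (Equiv.subtypeEquivRight hiff), Nat.card_eq_fintype_card,
    Fintype.card_coe, Finset.card_union_of_disjoint ?hd, Finset.card_product,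
    Finset.card_product]
  · simp
    omega
  · rw [Finset.disjoint_left]
    rintro ⟨a, b⟩ hab hab'
    simp only [Finset.mem_product, Finset.mem_singleton] at hab hab'
    omega

lemma H_one : H 1 0 = 1 := by
  unfold H
  rw [Nat.card_eq_one_iff_unique]
  constructor
  · constructor
    intro a b
    induction a using Quotient.ind with
    | _ Pa =>
      induction b using Quotient.ind with
      | _ Pb =>
        apply Quotient.sound
        refine ⟨⟨Equiv.refl _, ?_⟩⟩
        intro a b
        have hab : a = b := Subsingleton.elim a b
        subst hab
        exact iff_of_true (@le_refl _ (Pb.1).toPreorder a) (@le_refl _ (Pa.1).toPreorder a)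
  · refine ⟨Quotient.mk _ ⟨inferInstance, ?_⟩⟩
    have : IsEmpty {q : Fin 1 × Fin 1 // q.1 ⋖ q.2} := by
      refine ⟨fun q => ?_⟩
      have h := q.2.1
      have : q.1.1 = q.1.2 := Subsingleton.elim _ _
      rw [this] at h
      exact lt_irrefl _ h
    unfold nCovers
    exact Nat.card_of_isEmpty

theorem H_at_max_arcs_aux (p : ℕ) (hp : 1 ≤ p) :
    (Odd p → H p (p ^ 2 / 4) = p) ∧ (Even p → H p (p ^ 2 / 4) = p / 2) := by
  constructor
  · rintro ⟨k, rfl⟩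
    rcases Nat.eq_zero_or_pos k with rfl | hk
    · simpa using H_one
    · rw [H_eq_card_goodPar _ (by omega), card_goodPar_odd k hk]
  · rintro ⟨k, rfl⟩
    have hk : 1 ≤ k := by omega
    rw [show k + k = 2 * k from by omega, H_eq_card_goodPar _ (by omega),
      card_goodPar_even k hk]
    omega
end Count

/-- For `p ≥ 1`, the number of isomorphism classes of partial orders on `Fin p` with
exactly `⌊p²/4⌋` covering pairs is `p` if `p` is odd and `p/2` if `p` is even. -/
theorem H_at_max_arcs (p : ℕ) (hp : 1 ≤ p) :
    (Odd p → H p (p ^ 2 / 4) = p) ∧ (Even p → H p (p ^ 2 / 4) = p / 2) := by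
  exact H_at_max_arcs_aux p hp
end Lay
end

section
/- For all natural numbers p and a, H(p + 1, a) = H(p, a) + H₀(p + 1, a). (Adding or deleting an isolated point gives a bijection between isomorphism classes of posets on p points with a covering pairs and isomorphism classes of posets on p + 1 points with a covering pairs that contain at least one isolated point.) -/
section general
variable {α β : Type*} [PartialOrder α] [PartialOrder β]

/-- nCovers invariant under order iso. -/
lemma nCovers_congr_s9 (e : α ≃o β) :
    nCovers (inferInstance : PartialOrder α) = nCovers (inferInstance : PartialOrder β) := by
  unfold nCovers
  apply Nat.card_eq_of_bijective (fun q => ⟨(e q.1.1, e q.1.2), (apply_covBy_apply_iff e).2 q.2⟩)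
  constructor
  · rintro ⟨⟨x1,x2⟩,h⟩ ⟨⟨y1,y2⟩,h'⟩ hxy
    simp only [Subtype.mk.injEq, Prod.mk.injEq, EmbeddingLike.apply_eq_iff_eq] at hxy
    simp [Prod.ext_iff, hxy.1, hxy.2]
  · rintro ⟨⟨y1,y2⟩,h⟩
    refine ⟨⟨(e.symm y1, e.symm y2), ?_⟩, by simp⟩
    exact (apply_covBy_apply_iff e.symm).2 h

lemma noIsolated_congr (e : α ≃o β) :
    NoIsolated (inferInstance : PartialOrder α) ↔ NoIsolated (inferInstance : PartialOrder β) := by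
  unfold NoIsolated
  constructor
  · intro h y
    obtain ⟨z, hz⟩ := h (e.symm y)
    refine ⟨e z, ?_⟩
    rcases hz with h1 | h1
    · left; have := (apply_covBy_apply_iff e).2 h1; simpa using this
    · right; have := (apply_covBy_apply_iff e).2 h1; simpa using this
  · intro h x
    obtain ⟨z, hz⟩ := h (e x)
    refine ⟨e.symm z, ?_⟩
    rcases hz with h1 | h1
    · left; have := (apply_covBy_apply_iff e.symm).2 h1; simpa using this
    · right; have := (apply_covBy_apply_iff e.symm).2 h1; simpa using this

/-- A point comparable only to itself. -/
def Solo (x : α) : Prop := ∀ z : α, (x ≤ z → x = z) ∧ (z ≤ x → z = x)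

lemma solo_of_isolated [Finite α] {x : α} (h : ∀ y : α, ¬ (x ⋖ y ∨ y ⋖ x)) : Solo x := by
  intro z
  constructor
  · intro hxz
    by_contra hne
    have hlt : x < z := lt_of_le_of_ne hxz hne
    obtain ⟨m, hm, hmin⟩ := (Finite.to_wellFoundedLT (α := α)).wf.has_min {w | x < w} ⟨z, hlt⟩
    exact h m (Or.inl ⟨hm, fun c hc1 hc2 => hmin c (Set.mem_setOf.2 hc1) hc2⟩)
  · intro hzx
    by_contra hne
    have hlt : z < x := lt_of_le_of_ne hzx hne
    obtain ⟨m, hm, hmax⟩ := (Finite.to_wellFoundedGT (α := α)).wf.has_min {w | w < x} ⟨z, hlt⟩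
    exact h m (Or.inr ⟨hm, fun c hc1 hc2 => hmax c (Set.mem_setOf.2 hc2) hc1⟩)

/-- Swapping two solo points is an order automorphism. -/
def soloSwap [DecidableEq α] (x y : α) (hx : Solo x) (hy : Solo y) : α ≃o α where
  toEquiv := Equiv.swap x y
  map_rel_iff' := by
    have key : ∀ a b : α, a ≤ b → Equiv.swap x y a ≤ Equiv.swap x y b := by
      intro a b hab
      rcases eq_or_ne a b with rfl | hne
      · rfl
      have hax : a ≠ x := fun h => hne (by subst h; exact (hx b).1 hab)
      have hay : a ≠ y := fun h => hne (by subst h; exact (hy b).1 hab)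
      have hbx : b ≠ x := fun h => hne (by subst h; exact ((hx a).2 hab))
      have hby : b ≠ y := fun h => hne (by subst h; exact ((hy a).2 hab))
      rwa [Equiv.swap_apply_of_ne_of_ne hax hay, Equiv.swap_apply_of_ne_of_ne hbx hby]
    intro a b
    constructor
    · intro h
      have := key _ _ h
      simpa using this
    · exact key a b

end general

section sumcore
open Sum

/-- The disjoint-sum order with an added isolated `PUnit` point. -/
abbrev sumPO {γ : Type*} (P : PartialOrder γ) : PartialOrder (γ ⊕ PUnit) :=
  letI := P; inferInstance

variable {γ δ : Type*} [instγ : PartialOrder γ] [instδ : PartialOrder δ]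

lemma solo_inr : Solo (inr PUnit.unit : γ ⊕ PUnit) := by
  intro z
  constructor
  · intro h
    cases z with
    | inl a => exact absurd h not_inr_le_inl
    | inr b => cases b; rfl
  · intro h
    cases z with
    | inl a => exact absurd h not_inl_le_inr
    | inr b => cases b; rfl

lemma solo_congr (e : γ ≃o δ) {x : γ} (hx : Solo x) : Solo (e x) := by
  intro z
  constructor
  · intro h
    have : x ≤ e.symm z := by simpa using e.symm.monotone h
    have := (hx _).1 this
    rw [this]; simp
  · intro h
    have : e.symm z ≤ x := by simpa using e.symm.monotone h
    have := (hx _).2 this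
    rw [← this]; simp

lemma sum_lt_iff {x y : γ ⊕ PUnit} :
    x < y ↔ ∃ u v : γ, u < v ∧ x = inl u ∧ y = inl v := by
  rw [Sum.lt_def]
  constructor
  · intro h
    cases h with
    | inl h => exact ⟨_, _, h, rfl, rfl⟩
    | inr h => exact absurd h (lt_irrefl _)
  · rintro ⟨u, v, huv, rfl, rfl⟩
    exact Sum.LiftRel.inl huv

lemma sum_covBy_iff {x y : γ ⊕ PUnit} :
    x ⋖ y ↔ ∃ u v : γ, u ⋖ v ∧ x = inl u ∧ y = inl v := by
  constructor
  · rintro ⟨hlt, hmid⟩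
    obtain ⟨u, v, huv, rfl, rfl⟩ := sum_lt_iff.1 hlt
    refine ⟨u, v, ⟨huv, fun c hc1 hc2 => ?_⟩, rfl, rfl⟩
    exact hmid (inl_lt_inl_iff.2 hc1) (inl_lt_inl_iff.2 hc2)
  · rintro ⟨u, v, ⟨huv, hmid⟩, rfl, rfl⟩
    refine ⟨inl_lt_inl_iff.2 huv, fun c hc1 hc2 => ?_⟩
    obtain ⟨u', c', h1, he1, rfl⟩ := sum_lt_iff.1 hc1
    rw [inl.injEq] at he1; subst he1
    exact hmid h1 (inl_lt_inl_iff.1 hc2)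

lemma nCovers_sum : nCovers (sumPO instγ) = nCovers instγ := by
  unfold nCovers
  symm
  apply Nat.card_eq_of_bijective
    (fun q => ⟨(inl q.1.1, inl q.1.2), sum_covBy_iff.2 ⟨q.1.1, q.1.2, q.2, rfl, rfl⟩⟩)
  constructor
  · rintro ⟨⟨x1, x2⟩, h⟩ ⟨⟨y1, y2⟩, h'⟩ hxy
    simp only [Subtype.mk.injEq, Prod.mk.injEq, inl.injEq] at hxy
    simp [Prod.ext_iff, hxy.1, hxy.2]
  · rintro ⟨⟨y1, y2⟩, h⟩
    obtain ⟨u, v, huv, he1, he2⟩ := sum_covBy_iff.1 h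
    exact ⟨⟨(u, v), huv⟩, Subtype.ext (Prod.ext he1.symm he2.symm)⟩

lemma not_noIsolated_sum : ¬ NoIsolated (sumPO instγ) := by
  intro h
  obtain ⟨y, hy⟩ := h (inr PUnit.unit)
  have hs := solo_inr (γ := γ)
  rcases hy with h1 | h1
  · exact h1.lt.ne ((hs y).1 h1.lt.le)
  · exact h1.lt.ne ((hs y).2 h1.lt.le)

/-- Congruence of sum orders. -/
def sumIsoCongr (e : γ ≃o δ) : (γ ⊕ PUnit) ≃o (δ ⊕ PUnit) where
  toEquiv := Equiv.sumCongr e.toEquiv (Equiv.refl _)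
  map_rel_iff' := by
    rintro (a | a) (b | b) <;>
      simp [Sum.le_def, Sum.liftRel_iff]

/-- Splitting off a solo point. -/
def splitSolo [DecidableEq γ] (x : γ) (hx : Solo x) : ({y : γ // y ≠ x} ⊕ PUnit) ≃o γ where
  toFun z := Sum.elim Subtype.val (fun _ => x) z
  invFun y := if h : y = x then inr PUnit.unit else inl ⟨y, h⟩
  left_inv := by
    rintro (⟨y, hy⟩ | ⟨⟩)
    · simp [hy]
    · simp
  right_inv := by
    intro y
    by_cases h : y = x <;> simp [h]
  map_rel_iff' := by
    rintro (a | a) (b | b)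
    · simpa using (inl_le_inl_iff (β := PUnit) (a := a) (b := b)).symm
    · simp only [Equiv.coe_fn_mk, Sum.elim_inl, Sum.elim_inr]
      constructor
      · intro h; exact absurd ((hx _).2 h) a.2
      · intro h; exact absurd h not_inl_le_inr
    · simp only [Equiv.coe_fn_mk, Sum.elim_inl, Sum.elim_inr]
      constructor
      · intro h; exact absurd ((hx _).1 h).symm b.2
      · intro h; exact absurd h not_inr_le_inl
    · cases a; cases b
      simp only [Equiv.coe_fn_mk, Sum.elim_inr]
      exact iff_of_true le_rfl (inr_le_inr_iff.2 le_rfl)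

/-- Trim an iso of sums fixing the point. -/
noncomputable def chopIso (F : (γ ⊕ PUnit) ≃o (δ ⊕ PUnit))
    (hF : F (inr PUnit.unit) = inr PUnit.unit) : γ ≃o δ := by
  have key : ∀ u : γ, ∃ v : δ, F (inl u) = inl v := by
    intro u
    cases h : F (inl u) with
    | inl v => exact ⟨v, rfl⟩
    | inr b =>
      cases b
      rw [← hF] at h
      exact absurd (F.injective h) (by simp)
  have hF' : F.symm (inr PUnit.unit) = inr PUnit.unit := by
    rw [← hF]; simp
  have key' : ∀ v : δ, ∃ u : γ, F.symm (inl v) = inl u := by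
    intro v
    cases h : F.symm (inl v) with
    | inl u => exact ⟨u, rfl⟩
    | inr b =>
      cases b
      rw [← hF'] at h
      exact absurd (F.symm.injective h) (by simp)
  choose g hg using key
  choose g' hg' using key'
  refine ⟨⟨g, g', ?_, ?_⟩, ?_⟩
  · intro u
    have : F.symm (inl (g u)) = inl u := by rw [← hg u]; simp
    have h2 := hg' (g u)
    rw [this] at h2
    exact (inl.injEq _ _ ▸ h2).symm
  · intro v
    have : F (inl (g' v)) = inl v := by rw [← hg' v]; simp
    have h2 := hg (g' v)
    rw [this] at h2
    exact (inl.injEq _ _ ▸ h2).symm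
  · intro u v
    simp only [Equiv.coe_fn_mk]
    rw [← inl_le_inl_iff (β := PUnit) (a := g u) (b := g v), ← hg u, ← hg v,
      F.le_iff_le, inl_le_inl_iff]

/-- From an iso of sums, an iso of the summands. -/
lemma chop_nonempty (F : (γ ⊕ PUnit) ≃o (δ ⊕ PUnit)) : Nonempty (γ ≃o δ) := by
  classical
  set y := F (inr PUnit.unit) with hy
  have hsy : Solo y := solo_congr F solo_inr
  let F' := F.trans (soloSwap y (inr PUnit.unit) hsy solo_inr)
  have hF' : F' (inr PUnit.unit) = inr PUnit.unit := by
    show (soloSwap y (inr PUnit.unit) hsy solo_inr) (F (inr PUnit.unit)) = _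
    rw [← hy]
    exact Equiv.swap_apply_left _ _
  exact ⟨chopIso F' hF'⟩

end sumcore

section transport
open Sum

/-- Composition of order isos with fully implicit orders. -/
def oiTrans {α β γ : Type*} {A : LE α} {B : LE β} {C : LE γ}
    (e : @OrderIso α β A B) (f : @OrderIso β γ B C) : @OrderIso α γ A C :=
  @OrderIso.trans _ _ _ A B C e f

def oiSymm {α β : Type*} {A : LE α} {B : LE β} (e : @OrderIso α β A B) :
    @OrderIso β α B A :=
  @OrderIso.symm _ _ A B e

/-- Pull back a partial order along an equiv. -/
abbrev liftPO {α β : Type*} (f : α ≃ β) (Q : PartialOrder β) : PartialOrder α :=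
  @PartialOrder.lift α β Q f f.injective

/-- The tautological order iso for `liftPO`. -/
def liftIso {α β : Type*} (f : α ≃ β) (Q : PartialOrder β) :
    @OrderIso α β (liftPO f Q).toPreorder.toLE Q.toPreorder.toLE :=
  { f with map_rel_iff' := Iff.rfl }

variable {p : ℕ}

/-- The equiv splitting off the last point. -/
def eFin (p : ℕ) : Fin (p + 1) ≃ (Fin p ⊕ PUnit.{1}) :=
  finSuccEquivLast.trans (Equiv.optionEquivSumPUnit _)

/-- Extension of a partial order on `Fin p` by an isolated point. -/
def extP (P : PartialOrder (Fin p)) : PartialOrder (Fin (p + 1)) :=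
  liftPO (eFin p) (sumPO P)

/-- `extP P` is isomorphic to the sum order. -/
def extIso (P : PartialOrder (Fin p)) :
    @OrderIso (Fin (p + 1)) (Fin p ⊕ PUnit.{1}) (extP P).toPreorder.toLE
      (sumPO P).toPreorder.toLE :=
  liftIso (eFin p) (sumPO P)

lemma nCovers_extP (P : PartialOrder (Fin p)) : nCovers (extP P) = nCovers P :=
  (@nCovers_congr_s9 _ _ (extP P) (sumPO P) (extIso P)).trans (@nCovers_sum _ P)

lemma not_noIsolated_extP (P : PartialOrder (Fin p)) : ¬ NoIsolated (extP P) := by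
  intro h
  exact @not_noIsolated_sum _ P
    ((@noIsolated_congr _ _ (extP P) (sumPO P) (extIso P)).1 h)

lemma extP_congr {P Q : PartialOrder (Fin p)}
    (e : @OrderIso _ _ P.toPreorder.toLE Q.toPreorder.toLE) :
    Nonempty (@OrderIso _ _ (extP P).toPreorder.toLE (extP Q).toPreorder.toLE) :=
  ⟨oiTrans (oiTrans (extIso P) (@sumIsoCongr _ _ P Q e)) (oiSymm (extIso Q))⟩

lemma extP_inj {P Q : PartialOrder (Fin p)}
    (e : @OrderIso _ _ (extP P).toPreorder.toLE (extP Q).toPreorder.toLE) :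
    Nonempty (@OrderIso _ _ P.toPreorder.toLE Q.toPreorder.toLE) :=
  @chop_nonempty _ _ P Q (oiTrans (oiTrans (oiSymm (extIso P)) e) (extIso Q))

lemma extP_surj (Q : PartialOrder (Fin (p + 1))) (hQ : ¬ NoIsolated Q) :
    ∃ P : PartialOrder (Fin p),
      Nonempty (@OrderIso _ _ (extP P).toPreorder.toLE Q.toPreorder.toLE) := by
  letI := Q
  unfold NoIsolated at hQ
  push_neg at hQ
  obtain ⟨x, hx⟩ := hQ
  have hsolo : @Solo _ Q x := @solo_of_isolated _ Q _ x (fun y => not_or.mpr (hx y))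
  have hcard : Fintype.card {y : Fin (p + 1) // y ≠ x} = p := by
    simp [Fintype.card_subtype_compl]
  let t : Fin p ≃ {y : Fin (p + 1) // y ≠ x} :=
    (Fintype.equivOfCardEq (by simp [hcard]))
  classical
  set S : PartialOrder {y : Fin (p + 1) // y ≠ x} := inferInstance with hS
  refine ⟨liftPO t S, ⟨?_⟩⟩
  exact oiTrans
    (oiTrans (extIso (liftPO t S)) (@sumIsoCongr _ _ (liftPO t S) S (liftIso t S)))
    (@splitSolo _ Q _ x hsolo)

end transport

section quot

instance finPO (n : ℕ) : Finite (PartialOrder (Fin n)) := by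
  have hinj : Function.Injective
      (fun P : PartialOrder (Fin n) => @LE.le _ P.toPreorder.toLE) := by
    intro P Q h
    exact PartialOrder.ext fun x y => iff_of_eq (congrFun (congrFun h x) y)
  exact Finite.of_injective _ hinj

lemma card_quot_split {α : Type*} [Finite α] (s : Setoid α) (φ : α → Prop)
    (hφ : ∀ a b : α, s.r a b → (φ a ↔ φ b)) :
    Nat.card (Quotient s) =
      Nat.card (Quotient (s.comap (Subtype.val : {x // φ x} → α))) +
      Nat.card (Quotient (s.comap (Subtype.val : {x // ¬ φ x} → α))) := by
  classical
  rw [← Nat.card_sum]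
  apply Nat.card_congr
  refine ⟨Quotient.lift (fun a => if h : φ a
      then Sum.inl (Quotient.mk _ (⟨a, h⟩ : {x // φ x}))
      else Sum.inr (Quotient.mk _ (⟨a, h⟩ : {x // ¬ φ x}))) ?_,
    Sum.elim (Quotient.lift (fun x => Quotient.mk s x.val) ?_)
      (Quotient.lift (fun x => Quotient.mk s x.val) ?_), ?_, ?_⟩
  · intro a b hab
    by_cases h : φ a
    · rw [dif_pos h, dif_pos ((hφ a b hab).1 h)]
      exact congrArg Sum.inl (Quotient.sound hab)
    · rw [dif_neg h, dif_neg (fun hb => h ((hφ a b hab).2 hb))]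
      exact congrArg Sum.inr (Quotient.sound hab)
  · intro x y hxy; exact Quotient.sound hxy
  · intro x y hxy; exact Quotient.sound hxy
  · intro q
    induction q using Quotient.ind with
    | _ a =>
      by_cases h : φ a <;> simp [h]
  · rintro (q | q) <;>
      (induction q using Quotient.ind with
      | _ a => ?_)
    · have := a.2
      simp [this]
    · have := a.2
      simp [this]

end quot

/-- `H (p+1) a = H p a + H₀ (p+1) a`. -/
theorem H_succ (p a : ℕ) : H (p + 1) a = H p a + H0 (p + 1) a := by
  classical
  set s : Setoid {P : PartialOrder (Fin (p + 1)) // nCovers P = a} :=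
    (posetIsoSetoid (p + 1)).comap Subtype.val with hs
  have hφ : ∀ x y : {P : PartialOrder (Fin (p + 1)) // nCovers P = a},
      s.r x y → (NoIsolated x.val ↔ NoIsolated y.val) := by
    rintro x y ⟨e⟩
    exact @noIsolated_congr _ _ x.val y.val e
  have hsplit := card_quot_split s (fun x => NoIsolated x.val) hφ
  -- identify the NoIsolated piece with H0
  have h0 : Nat.card (Quotient (s.comap
      (Subtype.val : {x : {P : PartialOrder (Fin (p + 1)) // nCovers P = a} //
        NoIsolated x.val} → _))) = H0 (p + 1) a := by
    apply Nat.card_congr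
    apply Quotient.congr (Equiv.subtypeSubtypeEquivSubtypeInter _ _)
    intro x y
    exact Iff.rfl
  -- identify the other piece with H p a
  have h1 : H p a = Nat.card (Quotient (s.comap
      (Subtype.val : {x : {P : PartialOrder (Fin (p + 1)) // nCovers P = a} //
        ¬ NoIsolated x.val} → _))) := by
    unfold H
    apply Nat.card_eq_of_bijective
      (Quotient.map
        (fun P => (⟨⟨extP P.val, by rw [nCovers_extP]; exact P.2⟩,
          not_noIsolated_extP P.val⟩ :
            {x : {P : PartialOrder (Fin (p + 1)) // nCovers P = a} //
              ¬ NoIsolated x.val})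
          )
        (by rintro P Q ⟨e⟩; exact extP_congr e))
    constructor
    · intro q1 q2
      induction q1 using Quotient.ind with
      | _ P =>
        induction q2 using Quotient.ind with
        | _ Q =>
          intro h
          have h2 := Quotient.exact h
          exact Quotient.sound (extP_inj (Classical.choice h2))
    · intro q
      induction q using Quotient.ind with
      | _ x =>
        obtain ⟨P, ⟨e⟩⟩ := extP_surj x.val.val x.2
        have hc : nCovers P = a := by
          rw [← nCovers_extP P, @nCovers_congr_s9 _ _ (extP P) x.val.val e]
          exact x.val.2
        exact ⟨Quotient.mk _ ⟨P, hc⟩, Quotient.sound ⟨e⟩⟩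
  have hH : H (p + 1) a = Nat.card (Quotient s) := rfl
  rw [hH, hsplit, h0, ← h1, Nat.add_comm]
end

section
/- Let α be a finite type with p elements equipped with a partial order with a covering pairs, in which no point is isolated. If 2p > 3a, then some connected component of the cover graph is a pair, i.e. consists of exactly two points x, y with x ⋖ y. -/
open SimpleGraph in
/-- A connected component of a graph on a finite type has at least `Nat.card supp - 1`
edges with both endpoints inside it. -/
lemma coverGraph.aux_card {V : Type*} [Fintype V] (G : SimpleGraph V) (c : G.ConnectedComponent)
    (E : Finset (Sym2 V))
    (hE : ∀ u v, G.Adj u v → u ∈ c.supp → v ∈ c.supp → s(u, v) ∈ E) :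
    Nat.card c.supp - 1 ≤ E.card := by
  classical
  obtain ⟨r, hr'⟩ := c.exists_rep
  have hr : G.connectedComponentMk r = c := hr'
  have hrsupp : r ∈ c.supp := by rw [ConnectedComponent.mem_supp_iff, hr]
  set T : Finset V := Finset.univ.filter (fun v => v ∈ c.supp) with hT
  have hcardT : Nat.card c.supp = T.card := by
    rw [Nat.card_eq_fintype_card]
    exact (Set.toFinset_card c.supp).symm.trans (by congr 1; ext v; simp [hT])
  set S : Finset V := T.erase r with hS
  have hrT : r ∈ T := by
    simp only [hT, Finset.mem_filter]; exact ⟨Finset.mem_univ r, hrsupp⟩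
  have hScard : S.card = T.card - 1 := Finset.card_erase_of_mem hrT
  -- existence of a "parent" for each non-root vertex in the component
  have hex : ∀ v ∈ S, ∃ u, G.Adj u v ∧ G.dist r u + 1 = G.dist r v := by
    intro v hv
    have hvne : v ≠ r := (Finset.mem_erase.mp hv).1
    have hvsupp : v ∈ c.supp := by
      have := (Finset.mem_erase.mp hv).2; simpa [hT] using this
    have hreach : G.Reachable r v := by
      rw [ConnectedComponent.mem_supp_iff, ← hr] at hvsupp
      exact ConnectedComponent.eq.mp hvsupp.symm
    have hdpos : 0 < G.dist r v := hreach.pos_dist_of_ne (Ne.symm hvne)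
    obtain ⟨p, hp⟩ := hreach.exists_walk_length_eq_dist
    obtain ⟨u, hadj, q, hpq⟩ :=
      SimpleGraph.Walk.not_nil_iff.mp (SimpleGraph.Walk.not_nil_of_ne hvne (p := p.reverse))
    refine ⟨u, hadj.symm, ?_⟩
    have hql : q.length + 1 = G.dist r v := by
      have := congrArg SimpleGraph.Walk.length hpq
      simp [hp] at this
      omega
    have h1 : G.dist r u ≤ q.length := by
      simpa using G.dist_le q.reverse
    have h2 : G.dist r v ≤ G.dist r u + 1 := by
      obtain ⟨p', hp'⟩ := (hreach.trans hadj.reachable).exists_walk_length_eq_dist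
      have := G.dist_le (p'.concat hadj.symm)
      simpa [SimpleGraph.Walk.length_concat, hp'] using this
    omega
  set f : V → Sym2 V := fun v =>
    if h : ∃ u, G.Adj u v ∧ G.dist r u + 1 = G.dist r v then s(h.choose, v) else s(v, v)
    with hf
  have key : S.card ≤ E.card := by
    apply Finset.card_le_card_of_injOn f
    · intro v hv
      obtain h := hex v hv
      have hvsupp : v ∈ c.supp := by
        have := (Finset.mem_erase.mp hv).2; simpa [hT] using this
      have : f v = s(h.choose, v) := dif_pos h
      rw [this]
      obtain ⟨hadj, _⟩ := h.choose_spec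
      have husupp : h.choose ∈ c.supp := by
        rw [ConnectedComponent.mem_supp_iff] at hvsupp ⊢
        rw [← hvsupp]
        exact ConnectedComponent.eq.mpr hadj.reachable
      exact hE _ _ hadj husupp hvsupp
    · intro v hv w hw hvw
      obtain h1 := hex v hv
      obtain h2 := hex w hw
      rw [show f v = s(h1.choose, v) from dif_pos h1,
        show f w = s(h2.choose, w) from dif_pos h2] at hvw
      rcases Sym2.eq_iff.mp hvw with ⟨_, h⟩ | ⟨ha, hb⟩
      · exact h
      · exfalso
        obtain ⟨_, e1⟩ := h1.choose_spec
        obtain ⟨_, e2⟩ := h2.choose_spec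
        rw [ha] at e1
        rw [← hb] at e2
        omega
  omega

/-- If a partial order on a finite type with `p` elements and `a` covering pairs has
no isolated point and `2p > 3a`, then some connected component of the cover graph is a pair:
it consists of exactly two points `x, y` with `x ⋖ y`. -/
theorem exists_pair_component (α : Type*) [Fintype α] [PartialOrder α] (p a : ℕ)
    (hp : Fintype.card α = p)
    (ha : Nat.card {q : α × α // q.1 ⋖ q.2} = a)
    (hiso : ∀ x : α, ∃ y : α, x ⋖ y ∨ y ⋖ x)
    (h : 3 * a < 2 * p) :
    ∃ x y : α, x ⋖ y ∧ ((coverGraph α).connectedComponentMk x).supp = {x, y} := by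
  classical
  set G := coverGraph α with hG
  -- the number of covering pairs is the number of edges of the cover graph
  have hedge : G.edgeFinset.card = a := by
    have hbij : Function.Bijective
        (fun q : {q : α × α // q.1 ⋖ q.2} => (⟨s(q.1.1, q.1.2), Or.inl q.2⟩ : G.edgeSet)) := by
      constructor
      · rintro ⟨⟨x, y⟩, hxy⟩ ⟨⟨x', y'⟩, hxy'⟩ hq
        simp only [Subtype.mk.injEq] at hq ⊢
        rcases Sym2.eq_iff.mp (congrArg Subtype.val hq) with ⟨h1, h2⟩ | ⟨h1, h2⟩
        · exact Prod.ext h1 h2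
        · exfalso
          subst h1; subst h2
          exact absurd hxy'.lt (not_lt_of_gt hxy.lt)
      · rintro ⟨e, he⟩
        induction e using Sym2.ind with
        | _ x y =>
          rcases he with hxy | hyx
          · exact ⟨⟨(x, y), hxy⟩, rfl⟩
          · exact ⟨⟨(y, x), hyx⟩, Subtype.ext (Sym2.eq_swap)⟩
    have h1 : Nat.card {q : α × α // q.1 ⋖ q.2} = Nat.card G.edgeSet :=
      Nat.card_eq_of_bijective _ hbij
    rw [SimpleGraph.edgeFinset_card, ← Nat.card_eq_fintype_card, ← h1, ha]
  by_contra hcon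
  push_neg at hcon
  -- edges within a component
  set Ec : G.ConnectedComponent → Finset (Sym2 α) :=
    fun c => G.edgeFinset.filter (fun e => ∀ x ∈ e, x ∈ c.supp) with hEc
  set n : G.ConnectedComponent → ℕ := fun c => Nat.card c.supp with hn
  -- every component has at least 3 vertices
  have h3 : ∀ c : G.ConnectedComponent, 3 ≤ n c := by
    intro c
    by_contra hlt
    obtain ⟨v, hv'⟩ := c.exists_rep
    have hv : G.connectedComponentMk v = c := hv'
    obtain ⟨y, hy⟩ := hiso v
    have hadj : G.Adj v y := hy
    have hne : v ≠ y := hadj.ne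
    have hsub : ({v, y} : Set α) ⊆ c.supp := by
      rintro z (rfl | rfl)
      · rw [SimpleGraph.ConnectedComponent.mem_supp_iff, hv]
      · rw [SimpleGraph.ConnectedComponent.mem_supp_iff, ← hv]
        exact SimpleGraph.ConnectedComponent.eq.mpr hadj.reachable.symm
    have hfin : c.supp.Finite := Set.toFinite _
    have hncard : c.supp.ncard ≤ ({v, y} : Set α).ncard := by
      rw [Set.ncard_pair hne]
      have hnc : n c = c.supp.ncard := Nat.card_coe_set_eq c.supp
      omega
    have heq : ({v, y} : Set α) = c.supp := Set.eq_of_subset_of_ncard_le hsub hncard hfin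
    rcases hy with hvy | hyv
    · exact hcon v y hvy (by rw [hv]; exact heq.symm)
    · refine hcon y v hyv ?_
      have : G.connectedComponentMk y = c := by
        rw [← hv]; exact SimpleGraph.ConnectedComponent.eq.mpr hadj.reachable.symm
      rw [this, ← heq, Set.pair_comm]
  -- each component with n vertices has at least n - 1 internal edges
  have h4 : ∀ c : G.ConnectedComponent, 2 * n c ≤ 3 * (Ec c).card := by
    intro c
    have hb := coverGraph.aux_card G c (Ec c) ?_
    · have hnc : n c = Nat.card c.supp := rfl
      have := h3 c
      omega
    · intro u v huv hu hv
      rw [hEc, Finset.mem_filter]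
      refine ⟨SimpleGraph.mem_edgeFinset.mpr huv, ?_⟩
      intro x hx
      rcases Sym2.mem_iff.mp hx with rfl | rfl
      · exact hu
      · exact hv
  -- the vertex sets of the components partition α
  have hsum1 : ∑ c : G.ConnectedComponent, n c = p := by
    rw [← hp, ← Finset.card_univ]
    rw [Finset.card_eq_sum_card_fiberwise
      (f := fun v => G.connectedComponentMk v) (t := Finset.univ) (fun x _ => Finset.mem_univ _)]
    refine Finset.sum_congr rfl fun c _ => ?_
    show Nat.card c.supp = _
    rw [Nat.card_eq_fintype_card, ← Set.toFinset_card]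
    congr 1
    ext v
    simp [SimpleGraph.ConnectedComponent.mem_supp_iff]
  -- the internal edge sets are disjoint subsets of all edges
  have hsum2 : ∑ c : G.ConnectedComponent, (Ec c).card ≤ a := by
    rw [← hedge]
    have hdisj : ∀ c ∈ (Finset.univ : Finset G.ConnectedComponent), ∀ d ∈ Finset.univ,
        c ≠ d → Disjoint (Ec c) (Ec d) := by
      intro c _ d _ hcd
      rw [Finset.disjoint_left]
      intro e hec hed
      obtain ⟨x, hx⟩ : ∃ x, x ∈ e := ⟨e.out.1, Sym2.out_fst_mem e⟩
      rw [hEc, Finset.mem_filter] at hec hed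
      have h1 := hec.2 x hx
      have h2 := hed.2 x hx
      rw [SimpleGraph.ConnectedComponent.mem_supp_iff] at h1 h2
      exact hcd (h1 ▸ h2 ▸ rfl)
    calc ∑ c : G.ConnectedComponent, (Ec c).card
        = (Finset.univ.biUnion Ec).card := (Finset.card_biUnion hdisj).symm
      _ ≤ G.edgeFinset.card := Finset.card_le_card
          (Finset.biUnion_subset.mpr fun c _ => Finset.filter_subset _ _)
  -- conclude
  have : 2 * p ≤ 3 * a := by
    calc 2 * p = ∑ c : G.ConnectedComponent, 2 * n c := by rw [← Finset.mul_sum, hsum1]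
      _ ≤ ∑ c : G.ConnectedComponent, 3 * (Ec c).card := Finset.sum_le_sum fun c _ => h4 c
      _ = 3 * ∑ c : G.ConnectedComponent, (Ec c).card := by rw [Finset.mul_sum]
      _ ≤ 3 * a := Nat.mul_le_mul_left 3 hsum2
  omega
end

section
/- Let α be a finite type with p elements equipped with a partial order with a covering pairs, in which no point is isolated, and suppose 2p = 3a. If no connected component of the cover graph consists of exactly two points, then every connected component of the cover graph has exactly 3 vertices and contains exactly 2 covering pairs. -/
section
open SimpleGraph Finset

/-- Suppose a partial order on a finite type with `p` elements and `a` covering pairs has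
no isolated point and `2p = 3a`.  If no connected component of the cover graph consists of
exactly two points, then every connected component has exactly `3` vertices and contains
exactly `2` covering pairs. -/
theorem components_of_eq (α : Type*) [Fintype α] [PartialOrder α] (p a : ℕ)
    (hp : Fintype.card α = p)
    (ha : Nat.card {q : α × α // q.1 ⋖ q.2} = a)
    (hiso : ∀ x : α, ∃ y : α, x ⋖ y ∨ y ⋖ x)
    (h : 2 * p = 3 * a)
    (hnopair : ∀ C : (coverGraph α).ConnectedComponent, C.supp.ncard ≠ 2) :
    ∀ C : (coverGraph α).ConnectedComponent,
      C.supp.ncard = 3 ∧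
      {q : α × α | q.1 ∈ C.supp ∧ q.2 ∈ C.supp ∧ q.1 ⋖ q.2}.ncard = 2 := by
  classical
  set G := coverGraph α with hGdef
  haveI : Fintype G.ConnectedComponent := Fintype.ofFinite _
  -- vertex and edge counts of components
  set n : G.ConnectedComponent → ℕ :=
    fun D => (univ.filter (fun v => G.connectedComponentMk v = D)).card with hn
  set e : G.ConnectedComponent → ℕ :=
    fun D => (univ.filter
      (fun q : α × α => q.1 ⋖ q.2 ∧ G.connectedComponentMk q.1 = D)).card with he
  have hadj : ∀ {x y : α}, x ⋖ y → G.Adj x y := fun h => Or.inl h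
  -- supp description
  have hsuppF : ∀ D : G.ConnectedComponent,
      D.supp = ↑(univ.filter (fun v => G.connectedComponentMk v = D)) := by
    intro D; ext v; simp [ConnectedComponent.mem_supp_iff]
  have hsupp : ∀ D : G.ConnectedComponent, D.supp.ncard = n D := by
    intro D; rw [hsuppF D, Set.ncard_coe_finset]
  -- pair-set description
  have hpairs : ∀ D : G.ConnectedComponent,
      {q : α × α | q.1 ∈ D.supp ∧ q.2 ∈ D.supp ∧ q.1 ⋖ q.2}.ncard = e D := by
    intro D
    have : {q : α × α | q.1 ∈ D.supp ∧ q.2 ∈ D.supp ∧ q.1 ⋖ q.2}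
        = ↑(univ.filter (fun q : α × α => q.1 ⋖ q.2 ∧ G.connectedComponentMk q.1 = D)) := by
      ext ⟨x, y⟩
      simp only [Set.mem_setOf_eq, coe_filter, mem_univ, true_and,
        ConnectedComponent.mem_supp_iff]
      constructor
      · rintro ⟨h1, h2, h3⟩; exact ⟨h3, h1⟩
      · rintro ⟨h3, h1⟩
        exact ⟨h1, (ConnectedComponent.connectedComponentMk_eq_of_adj (hadj h3)).symm.trans h1, h3⟩
    rw [this, Set.ncard_coe_finset]
  -- sum of vertex counts
  have hA : ∑ D, n D = p := by
    rw [← hp, ← Finset.card_univ,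
      Finset.card_eq_sum_card_fiberwise (f := fun v => G.connectedComponentMk v)
        (t := univ) (fun x _ => mem_univ _)]
  -- sum of edge counts
  have hB : ∑ D, e D = a := by
    rw [← ha, Nat.card_eq_fintype_card, Fintype.card_subtype]
    rw [Finset.card_eq_sum_card_fiberwise (f := fun q : α × α => G.connectedComponentMk q.1)
        (t := univ) (fun x _ => mem_univ _)]
    congr 1; ext D
    rw [filter_filter]
  -- each component has at least 3 vertices
  have hge : ∀ D : G.ConnectedComponent, 3 ≤ n D := by
    intro D
    obtain ⟨r, hr⟩ := D.exists_rep
    obtain ⟨y, hy⟩ := hiso r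
    have hadjry : G.Adj r y := hy
    have h2 : 1 < n D := by
      apply Finset.one_lt_card.mpr
      refine ⟨r, ?_, y, ?_, (G.ne_of_adj hadjry)⟩
      · simp only [mem_filter, mem_univ, true_and]; exact hr
      · simp only [mem_filter, mem_univ, true_and]
        exact (ConnectedComponent.connectedComponentMk_eq_of_adj hadjry).symm.trans hr
    have h3 : n D ≠ 2 := by rw [← hsupp D]; exact hnopair D
    omega
  -- key bound: n D ≤ e D + 1
  have hkey : ∀ D : G.ConnectedComponent, n D ≤ e D + 1 := by
    intro D
    obtain ⟨r, hr⟩ := D.exists_rep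
    have hstep : ∀ v : α, ∃ u, G.connectedComponentMk v = D → v ≠ r →
        G.Adj u v ∧ G.dist r u + 1 = G.dist r v := by
      intro v
      by_cases hv : G.connectedComponentMk v = D ∧ v ≠ r
      · obtain ⟨hvD, hvr⟩ := hv
        have hreach : G.Reachable r v := ConnectedComponent.exact (hr.trans hvD.symm)
        obtain ⟨q, hq⟩ := hreach.exists_walk_length_eq_dist
        obtain ⟨u, huv, w, hw⟩ := Walk.exists_eq_cons_of_ne hvr q.reverse
        have hlen : w.length + 1 = G.dist r v := by
          have := congrArg Walk.length hw
          rw [Walk.length_reverse, Walk.length_cons] at this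
          omega
        have hru : G.Reachable r u := ⟨w.reverse⟩
        have h1 : G.dist r u ≤ w.length := by
          have := G.dist_le w.reverse
          rwa [Walk.length_reverse] at this
        have h2 : G.dist r v ≤ G.dist r u + 1 := by
          obtain ⟨w', hw'⟩ := hru.exists_walk_length_eq_dist
          have := G.dist_le (w'.concat huv.symm)
          rwa [Walk.length_concat, hw'] at this
        exact ⟨u, fun _ _ => ⟨huv.symm, by omega⟩⟩
      · exact ⟨v, fun h1 h2 => absurd ⟨h1, h2⟩ hv⟩
    choose u hu using hstep
    set F : α → α × α := fun v => if u v ⋖ v then (u v, v) else (v, u v) with hF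
    have hrmem : r ∈ univ.filter (fun v => G.connectedComponentMk v = D) := by
      simp only [mem_filter, mem_univ, true_and]; exact hr
    have hcard : ((univ.filter (fun v => G.connectedComponentMk v = D)).erase r).card
        = n D - 1 := Finset.card_erase_of_mem hrmem
    have hnpos : 1 ≤ n D := Finset.card_pos.mpr ⟨r, hrmem⟩
    have hmain : ((univ.filter (fun v => G.connectedComponentMk v = D)).erase r).card
        ≤ e D := by
      apply Finset.card_le_card_of_injOn F
      · intro v hvS
        rw [Finset.mem_coe, Finset.mem_erase, Finset.mem_filter] at hvS
        obtain ⟨hvr, _, hvD⟩ := hvS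
        obtain ⟨huadj, -⟩ := hu v hvD hvr
        have hmkuv : G.connectedComponentMk (u v) = D :=
          (ConnectedComponent.connectedComponentMk_eq_of_adj huadj).trans hvD
        rcases huadj with hc | hc
        · simp only [hF, if_pos hc, mem_coe, mem_filter, mem_univ, true_and]
          exact ⟨hc, hmkuv⟩
        · have hnc : ¬(u v ⋖ v) := fun hcon => hcon.lt.not_gt hc.lt
          simp only [hF, if_neg hnc, mem_coe, mem_filter, mem_univ, true_and]
          exact ⟨hc, hvD⟩
      · intro v hvS w hwS hFvw
        rw [Finset.coe_erase, Set.mem_diff, mem_coe, Finset.mem_filter] at hvS hwS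
        obtain ⟨⟨-, hvD⟩, hvr⟩ := hvS
        obtain ⟨⟨-, hwD⟩, hwr⟩ := hwS
        simp only [Set.mem_singleton_iff] at hvr hwr
        obtain ⟨-, hvd⟩ := hu v hvD hvr
        obtain ⟨-, hwd⟩ := hu w hwD hwr
        simp only [hF] at hFvw
        split_ifs at hFvw <;> rw [Prod.mk.injEq] at hFvw <;>
          obtain ⟨h1, h2⟩ := hFvw
        · exact h2
        · rw [h1] at hvd; rw [← h2] at hwd; omega
        · rw [h2] at hvd; rw [← h1] at hwd; omega
        · exact h1
    omega
  -- arithmetic conclusion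
  have hle : ∀ D ∈ (univ : Finset G.ConnectedComponent), 2 * n D ≤ 3 * e D := by
    intro D _
    have := hkey D
    have := hge D
    omega
  have hsum : ∑ D, 2 * n D = ∑ D, 3 * e D := by
    rw [← Finset.mul_sum, ← Finset.mul_sum, hA, hB, h]
  have heq : ∀ D ∈ (univ : Finset G.ConnectedComponent), 2 * n D = 3 * e D :=
    fun D hD => ((Finset.sum_eq_sum_iff_of_le hle).mp hsum) D hD
  intro C
  have h1 := heq C (mem_univ C)
  have h2 := hkey C
  have h3 := hge C
  rw [hsupp C, hpairs C]
  omega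

end
end
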